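/- arXiv:2212.11383 — 8 statements merged into one kernel-verified Lean document; each statement's English description precedes it below -/
import Mathlib

section
/- Let K be the field ℝ or ℂ, (V, B) a finite-dimensional symplectic vector space over K, and P : V → V a linear operator self-adjoint with respect to B. Let p_1, …, p_r be the distinct monic irreducible factors of the characteristic polynomial of P, and set V^{(i)} = Ker p_i(P)^{dim V} (the generalized eigenspace associated to p_i), so that V = ⊕_{i=1}^r V^{(i)}. Then a subspace W ⊆ V is invariant under Aut(V, B, P) if and only if W = ⊕_{i=1}^r (W ∩ V^{(i)}) and, for each i, the intersection W ∩ V^{(i)} is invariant under Aut(V^{(i)}, B|_{V^{(i)}}, P|_{V^{(i)}}). -/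
/-!
Put `Qᵢ = pᵢ ^ dim V` and `Rᵢ = ∏_{j ≠ i} Qⱼ`. The `Qᵢ` are pairwise coprime and their product
kills `P`, since the characteristic polynomial divides it; hence `V⁽ⁱ⁾ = ker Qᵢ(P)` and
`Uᵢ = ker Rᵢ(P)` are complementary `P`-invariant subspaces, and the `V⁽ⁱ⁾` span `V`. They are
`B`-orthogonal because polynomials in a self-adjoint `P` are self-adjoint: from `a Qᵢ + b Rᵢ = 1`,
every `u ∈ V⁽ⁱ⁾` equals `(b Rᵢ)(P) u`, so `B u v = B u ((b Rᵢ)(P) v) = 0` for `v ∈ Uᵢ`.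

Therefore any automorphism of `V⁽ⁱ⁾` extends by the identity on `Uᵢ` to an element of
`Aut(V, B, P)`. Extending `-1` shows that an invariant `W` contains the `V⁽ⁱ⁾`-components of its
vectors; extending arbitrary automorphisms shows that `W ∩ V⁽ⁱ⁾` is invariant. Conversely, every
element of `Aut(V, B, P)` commutes with the polynomials in `P`, hence preserves each `V⁽ⁱ⁾` and
restricts to an element of `Aut(V⁽ⁱ⁾, B|, P|)`.
-/

/-- A submodule `W` is invariant under `Aut(V, B, P)`, the group of linear automorphisms
preserving the bilinear form `B` and commuting with the operator `P`. -/
def IsInvariantSubmodule {K V : Type*} [Field K] [AddCommGroup V] [Module K V]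
    (B : LinearMap.BilinForm K V) (P : Module.End K V) (W : Submodule K V) : Prop :=
  ∀ g : V ≃ₗ[K] V, (∀ u v : V, B (g u) (g v) = B u v) → (∀ v : V, g (P v) = P (g v)) →
    W.map (g : V →ₗ[K] V) = W

open Polynomial LinearMap
open scoped Function

theorem Polynomial.Monic.dvd_prod_pow {K ι : Type*} [Field K] [Fintype ι] (p : ι → K[X])
    {f : K[X]} {N : ℕ} (hf : f.Monic) (hdeg : f.natDegree ≤ N)
    (hfac : ∀ q : K[X], q.Monic → Irreducible q → q ∣ f → ∃ i, q = p i) :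
    f ∣ ∏ i, p i ^ N := by
  induction N generalizing f with
  | zero => simp [hf.natDegree_eq_zero.mp (Nat.le_zero.mp hdeg)]
  | succ N ih =>
    by_cases hu : IsUnit f
    · simp [hf.natDegree_eq_zero.mp (natDegree_eq_zero_of_isUnit hu)]
    obtain ⟨q, hqm, hqi, f', rfl⟩ := f.exists_monic_irreducible_factor hu
    obtain ⟨i, rfl⟩ := hfac _ hqm hqi (dvd_mul_right _ _)
    have hf' : f'.Monic := hqm.of_mul_monic_left hf
    have hdeg' : f'.natDegree ≤ N := by
      rw [hqm.natDegree_mul hf'] at hdeg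
      have := hqi.natDegree_pos
      omega
    calc p i * f' ∣ (∏ j, p j) * ∏ j, p j ^ N :=
          mul_dvd_mul (Finset.dvd_prod_of_mem p (Finset.mem_univ i))
            (ih hf' hdeg' fun q hqm hqi hq => hfac q hqm hqi (hq.mul_left _))
      _ = ∏ j, p j ^ (N + 1) := by simp only [← Finset.prod_mul_distrib, pow_succ']

namespace Polynomial

variable {R M : Type*} [CommRing R] [AddCommGroup M] [Module R M] (f : Module.End R M)

theorem ker_aeval_le_ker_aeval_of_dvd {p q : R[X]} (h : p ∣ q) :
    ker (aeval f p) ≤ ker (aeval f q) := by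
  obtain ⟨c, rfl⟩ := h
  exact le_sup_left.trans sup_ker_aeval_le_ker_aeval_mul

theorem apply_mem_ker_aeval (p : R[X]) : ∀ x ∈ ker (aeval f p), f x ∈ ker (aeval f p) := by
  intro x hx
  have hcomm : Commute f (aeval f p) :=
    Algebra.commute_of_mem_adjoin_self (aeval_mem_adjoin_singleton R f)
  rw [mem_ker, ← Module.End.mul_apply, ← hcomm.eq, Module.End.mul_apply, mem_ker.mp hx, map_zero]

theorem isCompl_ker_aeval_of_isCoprime {p q : R[X]} (hpq : IsCoprime p q)
    (h : aeval f (p * q) = 0) : IsCompl (ker (aeval f p)) (ker (aeval f q)) :=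
  ⟨disjoint_ker_aeval_of_isCoprime f hpq, codisjoint_iff.mpr <| by
    rw [sup_ker_aeval_eq_ker_aeval_mul_of_coprime f hpq, h, ker_zero]⟩

theorem iSup_ker_aeval_eq_ker_aeval_prod {ι : Type*} [DecidableEq ι] (s : Finset ι) (q : ι → R[X])
    (hq : (s : Set ι).Pairwise (IsCoprime on q)) :
    ⨆ i ∈ s, ker (aeval f (q i)) = ker (aeval f (∏ i ∈ s, q i)) := by
  induction s using Finset.induction_on with
  | empty => simp [Module.End.one_eq_id]
  | insert i s hi ih =>
    rw [Finset.iSup_insert, Finset.prod_insert hi,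
      ih (hq.mono (Finset.coe_subset.mpr (Finset.subset_insert i s))),
      sup_ker_aeval_eq_ker_aeval_mul_of_coprime f (IsCoprime.prod_right fun j hj =>
        hq (Finset.mem_insert_self i s) (Finset.mem_insert_of_mem hj)
          (ne_of_mem_of_not_mem hj hi).symm)]

end Polynomial

namespace LinearMap.IsSelfAdjoint

variable {R M : Type*} [CommRing R] [AddCommGroup M] [Module R M] {B : LinearMap.BilinForm R M}
  {f : Module.End R M}

theorem pow (hf : B.IsSelfAdjoint f) (n : ℕ) : B.IsSelfAdjoint ⇑(f ^ n) := by
  induction n with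
  | zero => exact isAdjointPair_one
  | succ n ih =>
    have := ih.mul hf
    rwa [← pow_succ, ← pow_succ'] at this

theorem aeval (hf : B.IsSelfAdjoint f) (p : R[X]) : B.IsSelfAdjoint ⇑(aeval f p) := by
  induction p using Polynomial.induction_on' with
  | add p q hp hq =>
    rw [map_add]
    exact hp.add hq
  | monomial n a =>
    rw [aeval_monomial, ← Algebra.smul_def, coe_smul]
    exact (hf.pow n).smul a

theorem apply_eq_zero_of_mem_ker_aeval (hf : B.IsSelfAdjoint f) {p q : R[X]} (hpq : IsCoprime p q)
    {u v : M} (hu : u ∈ ker (Polynomial.aeval f p)) (hv : v ∈ ker (Polynomial.aeval f q)) :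
    B u v = 0 := by
  obtain ⟨a, b, hab⟩ := hpq
  calc B u v = B (Polynomial.aeval f (a * p + b * q) u) v := by
        rw [hab, map_one, Module.End.one_apply]
    _ = B u (Polynomial.aeval f (b * q) v) := by
        rw [map_add, add_apply, map_mul, Module.End.mul_apply, mem_ker.mp hu, map_zero, zero_add,
          hf.aeval]
    _ = 0 := by rw [map_mul, Module.End.mul_apply, mem_ker.mp hv, map_zero, map_zero]

end LinearMap.IsSelfAdjoint

namespace LinearEquiv

variable {R M : Type*} [CommRing R] [AddCommGroup M] [Module R M] {S T : Submodule R M}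

noncomputable def extendOfIsCompl (hST : IsCompl S T) (e : S ≃ₗ[R] S) : M ≃ₗ[R] M :=
  ((S.prodEquivOfIsCompl T hST).symm.trans (e.prodCongr (refl R T))).trans
    (S.prodEquivOfIsCompl T hST)

variable (hST : IsCompl S T) (e : S ≃ₗ[R] S)

theorem extendOfIsCompl_apply_add (x : S) (y : T) :
    e.extendOfIsCompl hST (x + y) = e x + y := by
  have : (S.prodEquivOfIsCompl T hST).symm (x + y) = (x, y) := by
    rw [symm_apply_eq, Submodule.coe_prodEquivOfIsCompl']
  simp [extendOfIsCompl, this, Submodule.coe_prodEquivOfIsCompl']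

@[simp]
theorem extendOfIsCompl_apply_left (x : S) : e.extendOfIsCompl hST x = e x := by
  simpa using e.extendOfIsCompl_apply_add hST x 0

@[simp]
theorem extendOfIsCompl_apply_right (y : T) : e.extendOfIsCompl hST y = y := by
  simpa using e.extendOfIsCompl_apply_add hST 0 y

theorem isOrthogonal_extendOfIsCompl {B : LinearMap.BilinForm R M}
    (hBST : ∀ x ∈ S, ∀ y ∈ T, B x y = 0) (hBTS : ∀ y ∈ T, ∀ x ∈ S, B y x = 0)
    (he : (B.domRestrict₁₂ S S).IsOrthogonal e) : B.IsOrthogonal (e.extendOfIsCompl hST) := by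
  intro u v
  obtain ⟨x, y, rfl, -⟩ := Submodule.existsUnique_add_of_isCompl hST u
  obtain ⟨x', y', rfl, -⟩ := Submodule.existsUnique_add_of_isCompl hST v
  have hx := he x x'
  simp only [domRestrict₁₂_apply] at hx
  rw [extendOfIsCompl_apply_add, extendOfIsCompl_apply_add]
  simp only [map_add, LinearMap.add_apply, hBST _ (e x).2 _ y'.2,
    hBST _ x.2 _ y'.2, hBTS _ y.2 _ (e x').2, hBTS _ y.2 _ x'.2, hx]

theorem extendOfIsCompl_apply_comm {f : Module.End R M} (hS : ∀ x ∈ S, f x ∈ S)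
    (hT : ∀ y ∈ T, f y ∈ T) (he : ∀ x, e (f.restrict hS x) = f.restrict hS (e x)) (v : M) :
    e.extendOfIsCompl hST (f v) = f (e.extendOfIsCompl hST v) := by
  obtain ⟨x, y, rfl, -⟩ := Submodule.existsUnique_add_of_isCompl hST v
  have hfx : f x = f.restrict hS x := rfl
  rw [extendOfIsCompl_apply_add, map_add, hfx, ← Submodule.coe_mk (f y) (hT y y.2),
    extendOfIsCompl_apply_add, he, map_add]
  rfl

end LinearEquiv

namespace Submodule

variable {R M : Type*} [Ring R] [AddCommGroup M] [Module R M]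

theorem map_map_subtype_eq_iff {S : Submodule R M} {g : M ≃ₗ[R] M} {h : S ≃ₗ[R] S}
    (hgh : ∀ x : S, g x = h x) (N : Submodule R S) :
    (N.map S.subtype).map (g : M →ₗ[R] M) = N.map S.subtype ↔ N.map (h : S →ₗ[R] S) = N := by
  have hcomp : (g : M →ₗ[R] M) ∘ₗ S.subtype = S.subtype ∘ₗ (h : S →ₗ[R] S) := LinearMap.ext hgh
  rw [← map_comp, hcomp, map_comp, (map_injective_of_injective S.injective_subtype).eq_iff]

theorem le_iSup_inf_of_forall_add_mem {ι : Type*} [Fintype ι] [DecidableEq ι]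
    {S U : ι → Submodule R M} {W : Submodule R M} (hS : ⨆ i, S i = ⊤)
    (hSU : ∀ i j, j ≠ i → S j ≤ U i) (hW : ∀ i, ∀ x ∈ S i, ∀ y ∈ U i, x + y ∈ W → x ∈ W) :
    W ≤ ⨆ i, W ⊓ S i := by
  intro w hw
  have hw' : w ∈ ⨆ i ∈ Finset.univ, S i := by simp [hS]
  obtain ⟨v, rfl⟩ := (mem_iSup_finset_iff_exists_sum S w).mp hw'
  refine sum_mem fun i _ =>
    mem_iSup_of_mem i ⟨hW i _ (v i).2 (∑ j ∈ Finset.univ.erase i, v j) ?_ ?_, (v i).2⟩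
  · exact sum_mem fun j hj => hSU i j (Finset.ne_of_mem_erase hj) (v j).2
  · rwa [Finset.add_sum_erase _ (fun j => (v j : M)) (Finset.mem_univ i)]

end Submodule

section Invariant

variable {K V : Type*} [Field K] [AddCommGroup V] [Module K V] {B : LinearMap.BilinForm K V}
  {P : Module.End K V}

theorem IsInvariantSubmodule.inf {W W' : Submodule K V} (hW : IsInvariantSubmodule B P W)
    (hW' : IsInvariantSubmodule B P W') : IsInvariantSubmodule B P (W ⊓ W') := fun g hgB hgP => by
  rw [Submodule.map_inf _ g.injective, hW g hgB hgP, hW' g hgB hgP]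

theorem IsInvariantSubmodule.iSup {ι : Type*} {W : ι → Submodule K V}
    (hW : ∀ i, IsInvariantSubmodule B P (W i)) : IsInvariantSubmodule B P (⨆ i, W i) :=
  fun g hgB hgP => by
    rw [Submodule.map_iSup]
    exact iSup_congr fun i => hW i g hgB hgP

theorem isInvariantSubmodule_ker_aeval (q : K[X]) :
    IsInvariantSubmodule B P (ker (aeval P q)) := by
  intro g _ hgP
  have hcomm : Commute (g : Module.End K V) (aeval P q) :=
    Algebra.commute_of_mem_adjoin_singleton_of_commute (aeval_mem_adjoin_singleton K P)
      (LinearMap.ext hgP)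
  have hcomap : (ker (aeval P q)).comap (g : V →ₗ[K] V) = ker (aeval P q) := by
    rw [← ker_comp, ← Module.End.mul_eq_comp, ← hcomm.eq, Module.End.mul_eq_comp,
      LinearEquiv.ker_comp]
  nth_rewrite 1 [← hcomap]
  exact Submodule.map_comap_eq_of_surjective g.surjective _

theorem IsInvariantSubmodule.map_subtype {S : Submodule K V} (hS : IsInvariantSubmodule B P S)
    (hPS : ∀ x ∈ S, P x ∈ S) {N : Submodule K S}
    (hN : IsInvariantSubmodule (B.domRestrict₁₂ S S) (P.restrict hPS) N) :
    IsInvariantSubmodule B P (N.map S.subtype) := by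
  intro g hgB hgP
  rw [Submodule.map_map_subtype_eq_iff (h := g.ofSubmodules S S (hS g hgB hgP)) fun _ => rfl]
  exact hN _ (fun u v => hgB u v) fun v => Subtype.ext (hgP v)

section CoprimeSplitting

variable {W : Submodule K V} {p q : K[X]}

theorem IsInvariantSubmodule.map_extendOfIsCompl_ker_aeval (hW : IsInvariantSubmodule B P W)
    (hP : B.IsSelfAdjoint P) (hpq : IsCoprime p q) (hann : aeval P (p * q) = 0)
    (e : ker (aeval P p) ≃ₗ[K] ker (aeval P p))
    (heB : (B.domRestrict₁₂ (ker (aeval P p)) (ker (aeval P p))).IsOrthogonal e)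
    (heP : ∀ x, e (P.restrict (apply_mem_ker_aeval P p) x)
      = P.restrict (apply_mem_ker_aeval P p) (e x)) :
    W.map (e.extendOfIsCompl (isCompl_ker_aeval_of_isCoprime P hpq hann) : V →ₗ[K] V) = W :=
  hW _ (e.isOrthogonal_extendOfIsCompl _
      (fun _ hx _ hy => hP.apply_eq_zero_of_mem_ker_aeval hpq hx hy)
      (fun _ hy _ hx => hP.apply_eq_zero_of_mem_ker_aeval hpq.symm hy hx) heB)
    (e.extendOfIsCompl_apply_comm _ _ (apply_mem_ker_aeval P q) heP)

theorem IsInvariantSubmodule.mem_of_add_mem_ker_aeval [NeZero (2 : K)]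
    (hW : IsInvariantSubmodule B P W) (hP : B.IsSelfAdjoint P) (hpq : IsCoprime p q)
    (hann : aeval P (p * q) = 0) {x y : V} (hx : x ∈ ker (aeval P p)) (hy : y ∈ ker (aeval P q))
    (hxy : x + y ∈ W) : x ∈ W := by
  have hWs := hW.map_extendOfIsCompl_ker_aeval hP hpq hann (LinearEquiv.neg K)
    (fun _ _ => by simp) fun _ => by simp
  have hs := (LinearEquiv.neg K).extendOfIsCompl_apply_add
    (isCompl_ker_aeval_of_isCoprime P hpq hann) ⟨x, hx⟩ ⟨y, hy⟩
  have hsW : -x + y ∈ W := by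
    rw [← hWs]
    exact ⟨x + y, hxy, by simpa using hs⟩
  have h2x : (2 : K) • x = (x + y) - (-x + y) := by module
  rw [← Submodule.smul_mem_iff W (two_ne_zero : (2 : K) ≠ 0), h2x]
  exact sub_mem hxy hsW

theorem IsInvariantSubmodule.comap_subtype_ker_aeval (hW : IsInvariantSubmodule B P W)
    (hP : B.IsSelfAdjoint P) (hpq : IsCoprime p q) (hann : aeval P (p * q) = 0)
    (hWp : W ≤ ker (aeval P p)) :
    IsInvariantSubmodule (B.domRestrict₁₂ (ker (aeval P p)) (ker (aeval P p)))
      (P.restrict (apply_mem_ker_aeval P p)) (W.comap (ker (aeval P p)).subtype) := by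
  intro e heB heP
  rw [← Submodule.map_map_subtype_eq_iff
    (e.extendOfIsCompl_apply_left (isCompl_ker_aeval_of_isCoprime P hpq hann)),
    Submodule.map_comap_subtype, inf_of_le_right hWp]
  exact hW.map_extendOfIsCompl_ker_aeval hP hpq hann e heB heP

end CoprimeSplitting

section PairwiseCoprime

variable {ι : Type*} [Fintype ι] [DecidableEq ι] {Q : ι → K[X]}

theorem Pairwise.isCoprime_prod_erase (hQ : Pairwise (IsCoprime on Q)) (i : ι) :
    IsCoprime (Q i) (∏ j ∈ Finset.univ.erase i, Q j) :=
  IsCoprime.prod_right fun _ hj => hQ (Finset.ne_of_mem_erase hj).symm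

theorem IsInvariantSubmodule.le_iSup_inf_ker_aeval [NeZero (2 : K)] {W : Submodule K V}
    (hW : IsInvariantSubmodule B P W) (hP : B.IsSelfAdjoint P) (hQ : Pairwise (IsCoprime on Q))
    (hann : aeval P (∏ i, Q i) = 0) : W ≤ ⨆ i, W ⊓ ker (aeval P (Q i)) := by
  refine Submodule.le_iSup_inf_of_forall_add_mem
    (U := fun i => ker (aeval P (∏ j ∈ Finset.univ.erase i, Q j))) ?_ ?_ fun i _ hx _ hy =>
      hW.mem_of_add_mem_ker_aeval hP (hQ.isCoprime_prod_erase i)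
        (by rwa [Finset.mul_prod_erase _ _ (Finset.mem_univ i)]) hx hy
  · simpa [hann] using iSup_ker_aeval_eq_ker_aeval_prod P Finset.univ Q (hQ.set_pairwise _)
  · exact fun i j hji => ker_aeval_le_ker_aeval_of_dvd P
      (Finset.dvd_prod_of_mem Q (Finset.mem_erase.mpr ⟨hji, Finset.mem_univ j⟩))

theorem isInvariantSubmodule_iff_eq_iSup_inf_ker_aeval [NeZero (2 : K)]
    (hP : B.IsSelfAdjoint P) (hQ : Pairwise (IsCoprime on Q)) (hann : aeval P (∏ i, Q i) = 0)
    (W : Submodule K V) :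
    IsInvariantSubmodule B P W ↔
      (W = ⨆ i, W ⊓ ker (aeval P (Q i))) ∧
      ∀ i, IsInvariantSubmodule (B.domRestrict₁₂ (ker (aeval P (Q i))) (ker (aeval P (Q i))))
        (P.restrict (apply_mem_ker_aeval P (Q i)))
        ((W ⊓ ker (aeval P (Q i))).comap (ker (aeval P (Q i))).subtype) := by
  constructor
  · intro hW
    refine ⟨le_antisymm (hW.le_iSup_inf_ker_aeval hP hQ hann) (iSup_le fun _ => inf_le_left),
      fun i => ?_⟩
    exact (hW.inf (isInvariantSubmodule_ker_aeval _)).comap_subtype_ker_aeval hP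
      (hQ.isCoprime_prod_erase i) (by rwa [Finset.mul_prod_erase _ _ (Finset.mem_univ i)])
      inf_le_right
  · rintro ⟨hsum, hpieces⟩
    rw [hsum]
    refine IsInvariantSubmodule.iSup fun i => ?_
    have := (isInvariantSubmodule_ker_aeval (Q i)).map_subtype _ (hpieces i)
    rwa [Submodule.map_comap_subtype, inf_of_le_right inf_le_right] at this

end PairwiseCoprime

end Invariant

theorem invariant_iff_sum_of_generalized_eigenspace_intersections_general
    (K V : Type*) [RCLike K] [AddCommGroup V] [Module K V] [FiniteDimensional K V]
    (B : LinearMap.BilinForm K V)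
    (P : Module.End K V) (hP : ∀ u v : V, B (P u) v = B u (P v))
    {r : ℕ} (p : Fin r → Polynomial K)
    (hmonic : ∀ i, (p i).Monic) (hirr : ∀ i, Irreducible (p i))
    (hinj : Function.Injective p)
    (hfac : ∀ q : Polynomial K, q.Monic → Irreducible q →
      (q ∣ LinearMap.charpoly P ↔ ∃ i, q = p i))
    (Vg : Fin r → Submodule K V)
    (hVg : ∀ i, Vg i
      = LinearMap.ker ((Polynomial.aeval P (p i)) ^ Module.finrank K V))
    (hPVg : ∀ i, ∀ x ∈ Vg i, P x ∈ Vg i)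
    (W : Submodule K V) :
    IsInvariantSubmodule B P W ↔
      (W = ⨆ i, W ⊓ Vg i) ∧
      ∀ i, IsInvariantSubmodule (B.domRestrict₁₂ (Vg i) (Vg i))
        (P.restrict (hPVg i)) ((W ⊓ Vg i).comap (Vg i).subtype) := by
  have hcop : Pairwise (IsCoprime on fun i => p i ^ Module.finrank K V) := fun i j hij =>
    IsCoprime.pow <| (hirr i).coprime_iff_not_dvd.mpr fun hdvd => hij <| hinj <|
      eq_of_monic_of_associated (hmonic i) (hmonic j) ((hirr i).associated_of_dvd (hirr j) hdvd)
  have hann : aeval P (∏ i, p i ^ Module.finrank K V) = 0 := by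
    obtain ⟨c, hc⟩ := (charpoly_monic P).dvd_prod_pow p (charpoly_natDegree P).le
      fun q hqm hqi hq => (hfac q hqm hqi).mp hq
    rw [hc, map_mul, aeval_self_charpoly, zero_mul]
  obtain rfl : Vg = fun i => ker (aeval P (p i ^ Module.finrank K V)) :=
    funext fun i => by rw [hVg, map_pow]
  exact isInvariantSubmodule_iff_eq_iSup_inf_ker_aeval hP hcop hann W

/-- **Decomposition of invariant subspaces over generalized eigenspaces.**
Let `K = ℝ` or `ℂ`, `(V, B)` a finite-dimensional symplectic space over `K`, `P` a
`B`-self-adjoint operator, `p 1, …, p r` the distinct monic irreducible factors of the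
characteristic polynomial of `P`, and `V⁽ⁱ⁾ = Ker (pᵢ(P) ^ dim V)` the associated
generalized eigenspaces. A subspace `W` is invariant under `Aut(V, B, P)` iff it is the
(direct) sum of its intersections with the `V⁽ⁱ⁾` and each intersection `W ∩ V⁽ⁱ⁾` is
invariant under `Aut(V⁽ⁱ⁾, B|, P|)`. -/
theorem invariant_iff_sum_of_generalized_eigenspace_intersections
    (K V : Type*) [RCLike K] [AddCommGroup V] [Module K V] [FiniteDimensional K V]
    (B : LinearMap.BilinForm K V) (hBalt : B.IsAlt)
    (hBnd : ∀ u : V, (∀ v : V, B u v = 0) → u = 0)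
    (P : Module.End K V) (hP : ∀ u v : V, B (P u) v = B u (P v))
    {r : ℕ} (p : Fin r → Polynomial K)
    (hmonic : ∀ i, (p i).Monic) (hirr : ∀ i, Irreducible (p i))
    (hinj : Function.Injective p)
    (hfac : ∀ q : Polynomial K, q.Monic → Irreducible q →
      (q ∣ LinearMap.charpoly P ↔ ∃ i, q = p i))
    (Vg : Fin r → Submodule K V)
    (hVg : ∀ i, Vg i
      = LinearMap.ker ((Polynomial.aeval P (p i)) ^ Module.finrank K V))
    (hPVg : ∀ i, ∀ x ∈ Vg i, P x ∈ Vg i)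
    (W : Submodule K V) :
    IsInvariantSubmodule B P W ↔
      (W = ⨆ i, W ⊓ Vg i) ∧
      ∀ i, IsInvariantSubmodule (B.domRestrict₁₂ (Vg i) (Vg i))
        (P.restrict (hPVg i)) ((W ⊓ Vg i).comap (Vg i).subtype) :=
  invariant_iff_sum_of_generalized_eigenspace_intersections_general K V B P hP p hmonic hirr hinj
    hfac Vg hVg hPVg W
end

section
/- Let K be the field ℝ or ℂ, (V, B) a finite-dimensional symplectic vector space over K, and P : V → V a nilpotent linear operator self-adjoint with respect to B. Then every subspace W ⊆ V invariant under Aut(V, B, P) is a finite sum of subspaces of the form Ker P^k ∩ Im P^l: there exist s ∈ ℕ and integers k_i, l_i ≥ 0 (i = 1, …, s) such that W = Σ_{i=1}^s (Ker P^{k_i} ∩ Im P^{l_i}). -/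
/-!
For `a` with `P ^ (m + 1) a = 0`, the operator `T u = ∑_{i + j = m} B(u, P^i a) P^j a` commutes
with `P`, is `B`-skew and squares to zero, so `1 + T ∈ Aut(V, B, P)` and `T` maps `W` into itself.
Let `w ∈ W` with `P^(h+1) w = 0` and `P^h w ∉ Im P^(h+l+1) = (Ker P^(h+l+1))^⊥`. For
`a ∈ Ker P^(h+l+1)`, `T w` (with `m = h + l`) is `B(P^h w, a) P^l a` plus terms in
`Ker P^(h+1) ∩ Im P^(l+1)`, so descending induction on `l` gives `Ker P^(h+1) ∩ Im P^l ⊆ W`.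
Such subspaces suffice to lower the height of any `w ∈ W` step by step, so `W` is the sum of the
subspaces `Ker P^k ∩ Im P^l` it contains.
-/

open LinearMap (ker range mem_ker mem_range_self)
open Module.End (mul_apply pow_map_zero_of_le)

section Nilpotent

variable {R M : Type*} [Ring R] [AddCommGroup M] [Module R M] {P : Module.End R M}

lemma Module.End.pow_apply_mem_range_pow {l j : ℕ} (hlj : l ≤ j) (a : M) :
    (P ^ j) a ∈ range (P ^ l) :=
  (LinearMap.iterateRange P).monotone hlj (mem_range_self _ a)

lemma Module.End.exists_mem_range_pow_notMem_range_pow_succ {n : ℕ} (hn : P ^ n = 0) {v : M}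
    (hv : v ≠ 0) {h : ℕ} (hvh : v ∈ range (P ^ h)) :
    ∃ l, h + l < n ∧ v ∈ range (P ^ (h + l)) ∧ v ∉ range (P ^ (h + l + 1)) := by
  by_contra! H
  have hmem : ∀ l, v ∈ range (P ^ (h + l)) := by
    intro l
    induction l with
    | zero => exact hvh
    | succ l ih =>
      by_cases hl : h + l < n
      · exact H l hl ih
      · rw [pow_eq_zero_of_le (by omega) hn, LinearMap.range_zero, Submodule.mem_bot] at ih
        exact absurd ih hv
  have hv0 := hmem n
  rw [pow_eq_zero_of_le (by omega) hn, LinearMap.range_zero, Submodule.mem_bot] at hv0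
  exact hv hv0

theorem Submodule.exists_eq_iSup_ker_pow_inf_range_pow (hnil : IsNilpotent P) (W : Submodule R M)
    (hW : ∀ h l w, w ∈ W → (P ^ (h + 1)) w = 0 → (P ^ h) w ∉ range (P ^ (h + l + 1)) →
      ker (P ^ (h + 1)) ⊓ range (P ^ l) ≤ W) :
    ∃ (s : ℕ) (k l : Fin s → ℕ), W = ⨆ i, ker (P ^ k i) ⊓ range (P ^ l i) := by
  obtain ⟨n, hn⟩ := hnil
  let ι := {p : Fin (n + 1) × Fin (n + 1) // ker (P ^ (p.1 : ℕ)) ⊓ range (P ^ (p.2 : ℕ)) ≤ W}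
  let U : ι → Submodule R M := fun p => ker (P ^ (p.1.1 : ℕ)) ⊓ range (P ^ (p.1.2 : ℕ))
  let e := (Finite.equivFin ι).symm
  refine ⟨_, fun i => (e i).1.1, fun i => (e i).1.2, le_antisymm ?_ (iSup_le fun i => (e i).2)⟩
  change W ≤ ⨆ i, U (e i)
  rw [e.iSup_comp (g := U)]
  suffices ∀ h, ∀ w ∈ W, (P ^ h) w = 0 → w ∈ ⨆ p, U p from fun w hw => this n w hw (by simp [hn])
  intro h
  induction h with
  | zero => intro w _ hw0; simp_all
  | succ h ih =>
    intro w hw hw1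
    by_cases h0 : (P ^ h) w = 0
    · exact ih w hw h0
    obtain ⟨l, hlt, ⟨x, hx⟩, hnr⟩ :=
      Module.End.exists_mem_range_pow_notMem_range_pow_succ hn h0 (mem_range_self _ w)
    have hU := hW h l w hw hw1 hnr
    have hPu : (P ^ h) ((P ^ l) x) = (P ^ h) w := by rw [← mul_apply, ← pow_add, hx]
    have hu : (P ^ l) x ∈ ker (P ^ (h + 1)) ⊓ range (P ^ l) := by
      refine Submodule.mem_inf.2 ⟨?_, mem_range_self _ x⟩
      rw [mem_ker, pow_succ', mul_apply, hPu, ← mul_apply, ← pow_succ', hw1]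
    have huS : (P ^ l) x ∈ ⨆ p, U p := le_iSup U ⟨(⟨h + 1, by omega⟩, ⟨l, by omega⟩), hU⟩ hu
    have hwu := ih (w - (P ^ l) x) (W.sub_mem hw (hU hu)) (by rw [map_sub, hPu, sub_self])
    simpa using Submodule.add_mem _ hwu huS

end Nilpotent

section Symplectic

open Finset.HasAntidiagonal (antidiagonal mem_antidiagonal)

variable {K V : Type*} [Field K] [AddCommGroup V] [Module K V]
  {B : LinearMap.BilinForm K V} {P : Module.End K V}

lemma LinearMap.IsSelfAdjoint.pow_s6 (hP : B.IsSelfAdjoint P) (n : ℕ) :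
    B.IsSelfAdjoint ⇑(P ^ n) := by
  induction n with
  | zero => intro u v; simp
  | succ n ih =>
    intro u v
    calc B ((P ^ (n + 1)) u) v = B ((P ^ n) (P u)) v := by rw [pow_succ, mul_apply]
      _ = B u (P ((P ^ n) v)) := by rw [ih, hP]
      _ = B u ((P ^ (n + 1)) v) := by rw [pow_succ', mul_apply]

lemma LinearMap.IsSelfAdjoint.apply_pow_apply_pow_eq_zero [NeZero (2 : K)] (hB : B.IsAlt)
    (hP : B.IsSelfAdjoint P) (a : V) (i j : ℕ) : B ((P ^ i) a) ((P ^ j) a) = 0 := by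
  have hsymm : B ((P ^ (i + j)) a) a = B a ((P ^ (i + j)) a) := hP.pow_s6 _ a a
  have hskew : -B a ((P ^ (i + j)) a) = B ((P ^ (i + j)) a) a := hB.neg_eq _ _
  have htwice : (2 : K) * B a ((P ^ (i + j)) a) = 0 := by linear_combination -hsymm - hskew
  rw [hP.pow_s6 i, ← mul_apply, ← pow_add]
  exact (mul_eq_zero.1 htwice).resolve_left two_ne_zero

variable (B P) in
noncomputable def chainMap (m : ℕ) (a : V) : Module.End K V :=
  ∑ p ∈ antidiagonal m, (B.flip ((P ^ p.1) a)).smulRight ((P ^ p.2) a)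

lemma chainMap_apply (m : ℕ) (a u : V) :
    chainMap B P m a u = ∑ p ∈ antidiagonal m, B u ((P ^ p.1) a) • (P ^ p.2) a := by
  simp [chainMap]

lemma commute_chainMap (hP : B.IsSelfAdjoint P) {m : ℕ} {a : V} (ha : (P ^ (m + 1)) a = 0) :
    Commute (chainMap B P m a) P := by
  refine LinearMap.ext fun u => ?_
  set F : ℕ × ℕ → V := fun p => B u ((P ^ p.1) a) • (P ^ p.2) a
  have hF : F (m + 1, 0) = 0 := by simp [F, ha]
  have hF' : F (0, m + 1) = 0 := by simp [F, ha]
  calc chainMap B P m a (P u) = ∑ p ∈ antidiagonal m, F (p.1 + 1, p.2) := by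
        rw [chainMap_apply]
        simp only [F, hP u, ← mul_apply, ← pow_succ']
    _ = ∑ p ∈ antidiagonal (m + 1), F p := by
        rw [Finset.Nat.sum_antidiagonal_succ, hF', zero_add]
    _ = ∑ p ∈ antidiagonal m, F (p.1, p.2 + 1) := by
        rw [Finset.Nat.sum_antidiagonal_succ', hF, zero_add]
    _ = P (chainMap B P m a u) := by
        rw [chainMap_apply]
        simp only [F, map_sum, map_smul, ← mul_apply, ← pow_succ']

lemma isSkewAdjoint_chainMap (hB : B.IsAlt) (m : ℕ) (a : V) :
    B.IsSkewAdjoint ⇑(chainMap B P m a) := by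
  intro u v
  simp only [chainMap_apply, Pi.neg_apply, map_neg, map_sum, map_smul, LinearMap.sum_apply,
    LinearMap.smul_apply, smul_eq_mul]
  rw [← Finset.Nat.sum_antidiagonal_swap, ← Finset.sum_neg_distrib]
  refine Finset.sum_congr rfl fun p _ => ?_
  rw [Prod.fst_swap, Prod.snd_swap, ← hB.neg_eq v]
  ring

lemma chainMap_mul_self [NeZero (2 : K)] (hB : B.IsAlt) (hP : B.IsSelfAdjoint P) (m : ℕ)
    (a : V) : chainMap B P m a * chainMap B P m a = 0 := by
  ext u
  rw [mul_apply, chainMap_apply (u := chainMap B P m a u), LinearMap.zero_apply]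
  refine Finset.sum_eq_zero fun p _ => ?_
  rw [chainMap_apply, map_sum, LinearMap.sum_apply]
  simp [hP.apply_pow_apply_pow_eq_zero hB]

lemma IsInvariantSubmodule.apply_mem_of_isSkewAdjoint {W : Submodule K V}
    (hW : IsInvariantSubmodule B P W) {T : Module.End K V} (hT : B.IsSkewAdjoint T)
    (hTT : T * T = 0) (hTP : Commute T P) {w : V} (hw : w ∈ W) : T w ∈ W := by
  have hinv : ∀ u, T (T u) = 0 := fun u => by rw [← mul_apply, hTT, LinearMap.zero_apply]
  let g : V ≃ₗ[K] V := LinearEquiv.ofLinearMap (1 + T) (1 - T)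
    (by ext u; simp [hinv]) (by ext u; simp [hinv])
  have hg : ∀ u, g u = u + T u := fun u => rfl
  have hgB : ∀ u v, B (g u) (g v) = B u v := fun u v => by
    simp only [hg, map_add, LinearMap.add_apply, hT u, Pi.neg_apply, hinv, map_neg, map_zero]
    ring
  have hgP : ∀ v, g (P v) = P (g v) := fun v => by
    rw [hg, hg, map_add, ← mul_apply, hTP.eq, mul_apply]
  have hgw : g w ∈ W := hW g hgB hgP ▸ Submodule.mem_map_of_mem hw
  simpa [hg] using W.sub_mem hgw hw

lemma IsInvariantSubmodule.chainMap_apply_mem [NeZero (2 : K)] {W : Submodule K V}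
    (hW : IsInvariantSubmodule B P W) (hB : B.IsAlt) (hP : B.IsSelfAdjoint P) {m : ℕ} {a : V}
    (ha : (P ^ (m + 1)) a = 0) {w : V} (hw : w ∈ W) : chainMap B P m a w ∈ W :=
  hW.apply_mem_of_isSkewAdjoint (isSkewAdjoint_chainMap hB m a) (chainMap_mul_self hB hP m a)
    (commute_chainMap hP ha) hw

lemma chainMap_apply_sub_smul_mem (hP : B.IsSelfAdjoint P) {h l : ℕ} {w a : V}
    (hw : (P ^ (h + 1)) w = 0) (ha : (P ^ (h + l + 1)) a = 0) :
    chainMap B P (h + l) a w - B ((P ^ h) w) a • (P ^ l) a ∈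
      ker (P ^ (h + 1)) ⊓ range (P ^ (l + 1)) := by
  have hhl : (h, l) ∈ antidiagonal (h + l) := mem_antidiagonal.2 rfl
  rw [chainMap_apply, ← Finset.add_sum_erase _ _ hhl, hP.pow_s6 h, add_sub_cancel_left]
  refine Submodule.sum_mem _ fun ⟨i, j⟩ hij => ?_
  obtain ⟨hne, hij⟩ := Finset.mem_erase.1 hij
  have hij : i + j = h + l := mem_antidiagonal.1 hij
  dsimp only
  rcases lt_trichotomy i h with hi | rfl | hi
  · have hker : (P ^ j) a ∈ ker (P ^ (h + 1)) := by
      rw [mem_ker, ← mul_apply, ← pow_add]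
      exact pow_map_zero_of_le (by omega) ha
    exact Submodule.smul_mem _ _ ⟨hker, Module.End.pow_apply_mem_range_pow (by omega) a⟩
  · obtain rfl : j = l := by omega
    exact absurd rfl hne
  · rw [← hP.pow_s6 i, pow_map_zero_of_le hi hw, LinearMap.map_zero₂, zero_smul]
    exact Submodule.zero_mem _

lemma LinearMap.IsSelfAdjoint.range_eq_orthogonal_ker [FiniteDimensional K V]
    {T : Module.End K V} (hT : B.IsSelfAdjoint T) (hB : B.Nondegenerate) :
    range T = B.orthogonal (ker T) := by
  refine Submodule.eq_of_le_of_finrank_le ?_ ?_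
  · rintro _ ⟨z, rfl⟩
    rw [LinearMap.BilinForm.mem_orthogonal_iff]
    intro c hc
    rw [← hT, mem_ker.1 hc, LinearMap.map_zero₂]
  · rw [LinearMap.BilinForm.finrank_orthogonal hB, ← LinearMap.finrank_range_add_finrank_ker T]
    omega

lemma Submodule.apply_mem_of_forall_smul_apply_mem {M : Type*} [AddCommGroup M] [Module K M]
    {U : Submodule K V} {W : Submodule K M} {φ : V →ₗ[K] K} {f : V →ₗ[K] M} {c : V} (hc : c ∈ U)
    (hφc : φ c ≠ 0) (h : ∀ a ∈ U, φ a • f a ∈ W) {a : V} (ha : a ∈ U) : f a ∈ W := by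
  by_cases hφa : φ a = 0
  · have hφac : φ (a + c) ≠ 0 := by rwa [map_add, hφa, zero_add]
    have hmem := W.sub_mem ((W.smul_mem_iff hφac).1 (h _ (U.add_mem ha hc)))
      ((W.smul_mem_iff hφc).1 (h c hc))
    simpa using hmem
  · exact (W.smul_mem_iff hφa).1 (h a ha)

theorem IsInvariantSubmodule.ker_pow_inf_range_pow_le [NeZero (2 : K)] [FiniteDimensional K V]
    {W : Submodule K V} (hW : IsInvariantSubmodule B P W) (hB : B.IsAlt)
    (hBnd : B.Nondegenerate) (hP : B.IsSelfAdjoint P) (hnil : IsNilpotent P) {h l : ℕ} {w : V}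
    (hw : w ∈ W) (hw1 : (P ^ (h + 1)) w = 0) (hnr : (P ^ h) w ∉ range (P ^ (h + l + 1))) :
    ker (P ^ (h + 1)) ⊓ range (P ^ l) ≤ W := by
  obtain ⟨n, hn⟩ := hnil
  induction hd : n - l generalizing l with
  | zero => simp [pow_eq_zero_of_le (by omega : n ≤ l) hn]
  | succ d ih =>
    have hdeeper : ker (P ^ (h + 1)) ⊓ range (P ^ (l + 1)) ≤ W :=
      ih (fun hmem => hnr ((LinearMap.iterateRange P).monotone (by omega) hmem)) (by omega)
    have hsmul : ∀ a ∈ ker (P ^ (h + l + 1)), B ((P ^ h) w) a • (P ^ l) a ∈ W := fun a ha => by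
      simpa using W.sub_mem (hW.chainMap_apply_mem hB hP (mem_ker.1 ha) hw)
        (hdeeper (chainMap_apply_sub_smul_mem hP hw1 (mem_ker.1 ha)))
    obtain ⟨c, hc, hwc⟩ : ∃ c ∈ ker (P ^ (h + l + 1)), B ((P ^ h) w) c ≠ 0 := by
      rw [(hP.pow_s6 _).range_eq_orthogonal_ker hBnd, LinearMap.BilinForm.mem_orthogonal_iff] at hnr
      simp only [not_forall] at hnr
      obtain ⟨c, hc, hcw⟩ := hnr
      exact ⟨c, hc, fun h0 => hcw (hB.isRefl _ _ h0)⟩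
    rintro _ ⟨hv, a, rfl⟩
    have ha : a ∈ ker (P ^ (h + l + 1)) := by
      rw [mem_ker, show h + l + 1 = h + 1 + l by omega, pow_add, mul_apply]
      exact mem_ker.1 hv
    exact Submodule.apply_mem_of_forall_smul_apply_mem (φ := B ((P ^ h) w)) (f := P ^ l)
      hc hwc hsmul ha

end Symplectic

/-- Every subspace of a finite-dimensional symplectic space `(V, B)` over `K = ℝ` or `ℂ`
invariant under `Aut(V, B, P)`, where `P` is a nilpotent `B`-self-adjoint operator, is a
finite sum of subspaces of the form `Ker P^k ∩ Im P^l`. -/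
theorem invariant_submodule_eq_sum_ker_inf_range
    (K V : Type*) [RCLike K] [AddCommGroup V] [Module K V] [FiniteDimensional K V]
    (B : LinearMap.BilinForm K V) (hBalt : B.IsAlt)
    (hBnd : ∀ u : V, (∀ v : V, B u v = 0) → u = 0)
    (P : Module.End K V) (hP : ∀ u v : V, B (P u) v = B u (P v))
    (hnil : IsNilpotent P)
    (W : Submodule K V) (hW : IsInvariantSubmodule B P W) :
    ∃ (s : ℕ) (k l : Fin s → ℕ),
      W = ⨆ i, LinearMap.ker (P ^ k i) ⊓ LinearMap.range (P ^ l i) := by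
  have hBnondeg : B.Nondegenerate := hBalt.isRefl.nondegenerate_iff_separatingLeft.2 hBnd
  exact W.exists_eq_iSup_ker_pow_inf_range_pow hnil fun _ _ _ hw hw1 hnr =>
    hW.ker_pow_inf_range_pow_le hBalt hBnondeg hP hnil hw hw1 hnr
end

section
/- Let K be the field ℝ or ℂ, (V, B) a nonzero finite-dimensional symplectic vector space over K, and P : V → V a nilpotent operator self-adjoint with respect to B such that all Jordan blocks of P have size exactly k, i.e. P^k = 0 and Ker P ⊆ Im P^{k−1}. Then Ker P^i = Im P^{k−i} for every 0 ≤ i ≤ k, and a subspace W ⊆ V is invariant under Aut(V, B, P) if and only if W = Ker P^i for some 0 ≤ i ≤ k. -/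
open LinearMap Finset

section Aux
variable {K V : Type*} [RCLike K] [AddCommGroup V] [Module K V]
variable (B : LinearMap.BilinForm K V) (P : Module.End K V)

lemma pow_pow_apply (a b : ℕ) (z : V) : (P ^ a) ((P ^ b) z) = (P ^ (a + b)) z := by
  rw [pow_add, Module.End.mul_apply]

lemma pow_apply_congr {a b : ℕ} (h : a = b) (z : V) : (P ^ a) z = (P ^ b) z := by rw [h]

lemma ppa {a b c : ℕ} (h : a + b = c) (z : V) : (P ^ a) ((P ^ b) z) = (P ^ c) z := by
  rw [pow_pow_apply, h]


lemma aux_pow_adj (hP : ∀ u v : V, B (P u) v = B u (P v)) (a : ℕ) (u v : V) :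
    B ((P ^ a) u) v = B u ((P ^ a) v) := by
  induction a generalizing v with
  | zero => simp
  | succ n ih =>
    have h1 : (P ^ (n + 1)) u = P ((P ^ n) u) := by rw [pow_succ', Module.End.mul_apply]
    have h2 : (P ^ (n + 1)) v = (P ^ n) (P v) := by rw [pow_succ, Module.End.mul_apply]
    rw [h1, h2, hP, ih (P v)]

lemma aux_self_pair (hBalt : B.IsAlt) (hP : ∀ u v : V, B (P u) v = B u (P v))
    (s : ℕ) (u : V) : B u ((P ^ s) u) = 0 := by
  have h1 : B ((P ^ s) u) u = B u ((P ^ s) u) := aux_pow_adj B P hP s u u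
  have h2 : - B ((P ^ s) u) u = B u ((P ^ s) u) := LinearMap.IsAlt.neg hBalt _ _
  have h3 : B u ((P ^ s) u) + B u ((P ^ s) u) = 0 := by
    nth_rewrite 1 [← h1]
    rw [← h2]; ring
  have := add_self_eq_zero.mp h3
  exact this
end Aux

section N
variable {K V : Type*} [RCLike K] [AddCommGroup V] [Module K V]
variable (B : LinearMap.BilinForm K V) (P : Module.End K V) (k : ℕ)

noncomputable def Nmap (u : V) : Module.End K V :=
  ∑ j ∈ Finset.range k, ((B.flip ((P ^ j) u)).smulRight ((P ^ (k - 1 - j)) u))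

lemma Nmap_apply (u x : V) :
    Nmap B P k u x = ∑ j ∈ Finset.range k, B x ((P ^ j) u) • ((P ^ (k - 1 - j)) u) := by
  simp [Nmap, LinearMap.sum_apply]

lemma Nmap_comm (hP : ∀ u v : V, B (P u) v = B u (P v)) (hPk : P ^ k = 0) (u x : V) :
    Nmap B P k u (P x) = P (Nmap B P k u x) := by
  set f : ℕ → V := fun j => B x ((P ^ j) u) • ((P ^ (k - j)) u) with hf
  have hL : Nmap B P k u (P x) = ∑ j ∈ Finset.range k, f (j + 1) := by
    rw [Nmap_apply]
    refine Finset.sum_congr rfl fun j hj => ?_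
    have h1 : B (P x) ((P ^ j) u) = B x ((P ^ (j + 1)) u) := by
      rw [hP, pow_succ', Module.End.mul_apply]
    have h2 : k - 1 - j = k - (j + 1) := by omega
    rw [h1, h2]
  have hR : P (Nmap B P k u x) = ∑ j ∈ Finset.range k, f j := by
    rw [Nmap_apply, map_sum]
    refine Finset.sum_congr rfl fun j hj => ?_
    have hj' : j < k := Finset.mem_range.mp hj
    rw [map_smul, hf]
    simp only
    congr 1
    have h := pow_pow_apply P 1 (k - 1 - j) u
    rw [pow_one] at h
    rw [h]
    congr 1
    congr 1
    omega
  have e1 : ∑ j ∈ Finset.range (k + 1), f j = (∑ j ∈ Finset.range k, f (j + 1)) + f 0 :=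
    Finset.sum_range_succ' f k
  have e2 : ∑ j ∈ Finset.range (k + 1), f j = (∑ j ∈ Finset.range k, f j) + f k :=
    Finset.sum_range_succ f k
  have hf0 : f 0 = 0 := by simp [hf, hPk]
  have hfk : f k = 0 := by simp [hf, hPk]
  rw [hf0, add_zero] at e1
  rw [hfk, add_zero] at e2
  rw [hL, hR, ← e1, e2]
end N

section N2
variable {K V : Type*} [RCLike K] [AddCommGroup V] [Module K V]
variable (B : LinearMap.BilinForm K V) (P : Module.End K V) (k : ℕ)

lemma Nmap_pow_self (hBalt : B.IsAlt) (hP : ∀ u v : V, B (P u) v = B u (P v))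
    (u : V) (s : ℕ) : Nmap B P k u ((P ^ s) u) = 0 := by
  rw [Nmap_apply]
  refine Finset.sum_eq_zero fun j hj => ?_
  rw [aux_pow_adj B P hP s, pow_pow_apply, aux_self_pair B P hBalt hP, zero_smul]

lemma Nmap_sq (hBalt : B.IsAlt) (hP : ∀ u v : V, B (P u) v = B u (P v))
    (u x : V) : Nmap B P k u (Nmap B P k u x) = 0 := by
  rw [Nmap_apply B P k u x, map_sum]
  refine Finset.sum_eq_zero fun j hj => ?_
  rw [map_smul, Nmap_pow_self B P k hBalt hP, smul_zero]

lemma Nmap_skew (hBalt : B.IsAlt) (hP : ∀ u v : V, B (P u) v = B u (P v))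
    (u x y : V) : B (Nmap B P k u x) y = - B x (Nmap B P k u y) := by
  have hL : B (Nmap B P k u x) y
      = ∑ j ∈ Finset.range k, B x ((P ^ j) u) * B ((P ^ (k - 1 - j)) u) y := by
    rw [Nmap_apply, map_sum, LinearMap.sum_apply]
    refine Finset.sum_congr rfl fun j hj => ?_
    rw [map_smul, LinearMap.smul_apply, smul_eq_mul]
  have hR : B x (Nmap B P k u y)
      = ∑ j ∈ Finset.range k, B y ((P ^ (k - 1 - j)) u) * B x ((P ^ j) u) := by
    rw [Nmap_apply, map_sum]
    rw [← Finset.sum_range_reflect]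
    refine Finset.sum_congr rfl fun j hj => ?_
    have hj' : j < k := Finset.mem_range.mp hj
    have h1 : k - 1 - (k - 1 - j) = j := by omega
    rw [map_smul, smul_eq_mul, h1]
  rw [hL, hR, ← Finset.sum_neg_distrib]
  refine Finset.sum_congr rfl fun j hj => ?_
  have h2 : B ((P ^ (k - 1 - j)) u) y = - B y ((P ^ (k - 1 - j)) u) := by
    rw [← LinearMap.IsAlt.neg hBalt]
  rw [h2]; ring

lemma Nmap_isometry (hBalt : B.IsAlt) (hP : ∀ u v : V, B (P u) v = B u (P v))
    (u x y : V) :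
    B (x + Nmap B P k u x) (y + Nmap B P k u y) = B x y := by
  simp only [map_add, LinearMap.add_apply]
  have h1 : B (Nmap B P k u x) y = - B x (Nmap B P k u y) := Nmap_skew B P k hBalt hP u x y
  have h2 : B (Nmap B P k u x) (Nmap B P k u y) = 0 := by
    rw [Nmap_skew B P k hBalt hP, Nmap_sq B P k hBalt hP, map_zero, neg_zero]
  rw [h1, h2]; ring

noncomputable def gEquiv (hBalt : B.IsAlt) (hP : ∀ u v : V, B (P u) v = B u (P v))
    (u : V) : V ≃ₗ[K] V :=
  LinearEquiv.ofLinear (1 + Nmap B P k u) (1 - Nmap B P k u)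
    (by
      ext x
      simp only [LinearMap.comp_apply, LinearMap.add_apply, LinearMap.sub_apply,
        Module.End.one_apply, LinearMap.id_apply, map_sub, map_add]
      rw [Nmap_sq B P k hBalt hP]
      abel)
    (by
      ext x
      simp only [LinearMap.comp_apply, LinearMap.add_apply, LinearMap.sub_apply,
        Module.End.one_apply, LinearMap.id_apply, map_sub, map_add]
      rw [Nmap_sq B P k hBalt hP]
      abel)

lemma gEquiv_apply (hBalt : B.IsAlt) (hP : ∀ u v : V, B (P u) v = B u (P v)) (u x : V) :
    gEquiv B P k hBalt hP u x = x + Nmap B P k u x := by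
  simp [gEquiv, LinearEquiv.ofLinear_apply]
end N2

section Part1
variable {K V : Type*} [RCLike K] [AddCommGroup V] [Module K V]
variable (B : LinearMap.BilinForm K V) (P : Module.End K V) (k : ℕ)

lemma range_pow_le (a b : ℕ) (h : b ≤ a) :
    LinearMap.range (P ^ a) ≤ LinearMap.range (P ^ b) := by
  rintro _ ⟨z, rfl⟩
  exact ⟨(P ^ (a - b)) z, ppa P (by omega) z⟩

lemma part1 (hPk : P ^ k = 0)
    (hker : LinearMap.ker P ≤ LinearMap.range (P ^ (k - 1))) :
    ∀ i ≤ k, LinearMap.ker (P ^ i) = LinearMap.range (P ^ (k - i)) := by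
  intro i hik
  induction i with
  | zero =>
    rw [pow_zero, Nat.sub_zero, hPk, LinearMap.range_zero, Module.End.one_eq_id,
      LinearMap.ker_id]
  | succ n ih =>
    have hnk : n ≤ k := Nat.le_of_succ_le hik
    have ihn := ih hnk
    apply le_antisymm
    · intro v hv
      have hv' : (P ^ (n + 1)) v = 0 := hv
      have h1 : (P ^ n) (P v) = 0 := by
        rw [← hv', pow_succ, Module.End.mul_apply]
      have h2 : P v ∈ LinearMap.range (P ^ (k - n)) := by
        rw [← ihn]; exact h1
      obtain ⟨w, hw⟩ := h2
      have h3 : P v = P ((P ^ (k - n - 1)) w) := by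
        rw [← hw]
        have h := pow_pow_apply P 1 (k - n - 1) w
        rw [pow_one] at h
        rw [h]; exact pow_apply_congr P (by omega) w
      have h4 : v - (P ^ (k - n - 1)) w ∈ LinearMap.ker P := by
        rw [LinearMap.mem_ker, map_sub, h3, sub_self]
      have h5 := hker h4
      have h6 : v - (P ^ (k - n - 1)) w ∈ LinearMap.range (P ^ (k - (n + 1))) := by
        refine range_pow_le P (k - 1) (k - (n + 1)) (by omega) h5
      have h7 : (P ^ (k - n - 1)) w ∈ LinearMap.range (P ^ (k - (n + 1))) :=
        ⟨w, pow_apply_congr P (by omega) w⟩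
      have := Submodule.add_mem _ h6 h7
      rwa [sub_add_cancel] at this
    · rintro _ ⟨w, rfl⟩
      have h : (P ^ (n + 1)) ((P ^ (k - (n + 1))) w) = (P ^ k) w := by
        exact ppa P (by omega) w
      rw [LinearMap.mem_ker, h, hPk, LinearMap.zero_apply]

lemma ker_pow_invariant (i : ℕ) : IsInvariantSubmodule B P (LinearMap.ker (P ^ i)) := by
  intro g hB hPg
  have hgi : ∀ v : V, g ((P ^ i) v) = (P ^ i) (g v) := by
    intro v
    induction i generalizing v with
    | zero => simp
    | succ n ih =>
      have h1 : (P ^ (n + 1)) v = (P ^ n) (P v) := by rw [pow_succ, Module.End.mul_apply]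
      have h2 : (P ^ (n + 1)) (g v) = (P ^ n) (P (g v)) := by
        rw [pow_succ, Module.End.mul_apply]
      rw [h1, h2, ih (P v), hPg]
  apply le_antisymm
  · rintro _ ⟨y, hy, rfl⟩
    simp only [SetLike.mem_coe, LinearMap.mem_ker] at hy ⊢
    rw [LinearEquiv.coe_coe, ← hgi, hy, map_zero]
  · intro x hx
    rw [LinearMap.mem_ker] at hx
    refine ⟨g.symm x, ?_, by simp⟩
    simp only [SetLike.mem_coe, LinearMap.mem_ker]
    apply g.injective
    rw [hgi, LinearEquiv.apply_symm_apply, hx, map_zero]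
end Part1

section Main
variable {K V : Type*} [RCLike K] [AddCommGroup V] [Module K V]

lemma invariant_eq_ker (B : LinearMap.BilinForm K V) (P : Module.End K V) (k : ℕ)
    (hBalt : B.IsAlt)
    (hBnd : ∀ u : V, (∀ v : V, B u v = 0) → u = 0)
    (hP : ∀ u v : V, B (P u) v = B u (P v))
    (hPk : P ^ k = 0)
    (hker : LinearMap.ker P ≤ LinearMap.range (P ^ (k - 1)))
    (W : Submodule K V) (hW : IsInvariantSubmodule B P W) :
    ∃ i ≤ k, W = LinearMap.ker (P ^ i) := by
  classical
  have hex : ∃ n, W ≤ LinearMap.ker (P ^ n) :=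
    ⟨k, fun x _ => by rw [LinearMap.mem_ker, hPk, LinearMap.zero_apply]⟩
  set i := Nat.find hex with hidef
  have hWi : W ≤ LinearMap.ker (P ^ i) := Nat.find_spec hex
  have hik : i ≤ k :=
    Nat.find_le (fun x _ => by rw [LinearMap.mem_ker, hPk, LinearMap.zero_apply])
  refine ⟨i, hik, ?_⟩
  rcases Nat.eq_zero_or_pos i with h0 | hpos
  · have hbot : W = ⊥ := by
      apply le_bot_iff.mp
      intro x hx
      have hx0 : x ∈ LinearMap.ker (P ^ i) := hWi hx
      rwa [h0, pow_zero, Module.End.one_eq_id, LinearMap.ker_id] at hx0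
    rw [hbot, h0, pow_zero, Module.End.one_eq_id, LinearMap.ker_id]
  · obtain ⟨m, hm⟩ : ∃ m, i = m + 1 := ⟨i - 1, by omega⟩
    have hmk : m < k := by omega
    have hnot : ¬ W ≤ LinearMap.ker (P ^ m) := Nat.find_min hex (by omega)
    obtain ⟨x, hxW, hxm⟩ : ∃ x ∈ W, (P ^ m) x ≠ 0 := by
      by_contra h
      push_neg at h
      exact hnot fun y hy => LinearMap.mem_ker.mpr (h y hy)
    have hxzero : ∀ j, i ≤ j → (P ^ j) x = 0 := by
      intro j hj
      have h1 : (P ^ (j - i)) ((P ^ i) x) = (P ^ j) x := ppa P (by omega) x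
      have h2 : (P ^ i) x = 0 := hWi hxW
      rw [← h1, h2, map_zero]
    have hNW : ∀ (u y : V), y ∈ W → Nmap B P k u y ∈ W := by
      intro u y hy
      have hmap := hW (gEquiv B P k hBalt hP u)
        (fun a b => by
          rw [gEquiv_apply, gEquiv_apply]
          exact Nmap_isometry B P k hBalt hP u a b)
        (fun v => by
          rw [gEquiv_apply, gEquiv_apply, Nmap_comm B P k hP hPk, map_add])
      have h1 : (gEquiv B P k hBalt hP u) y ∈ W := by
        rw [← hmap]
        exact Submodule.mem_map_of_mem hy
      rw [gEquiv_apply] at h1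
      have h2 := W.sub_mem h1 hy
      rwa [add_sub_cancel_left] at h2
    have hMW : ∀ (u v y : V), y ∈ W →
        (∑ j ∈ Finset.range k,
          (B y ((P ^ j) u) • ((P ^ (k - 1 - j)) v)
            + B y ((P ^ j) v) • ((P ^ (k - 1 - j)) u))) ∈ W := by
      intro u v y hy
      have h1 := hNW (u + v) y hy
      have h2 := hNW u y hy
      have h3 := hNW v y hy
      have key : Nmap B P k (u + v) y - Nmap B P k u y - Nmap B P k v y
          = ∑ j ∈ Finset.range k,
            (B y ((P ^ j) u) • ((P ^ (k - 1 - j)) v)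
              + B y ((P ^ j) v) • ((P ^ (k - 1 - j)) u)) := by
        rw [Nmap_apply, Nmap_apply, Nmap_apply, ← Finset.sum_sub_distrib,
          ← Finset.sum_sub_distrib]
        refine Finset.sum_congr rfl fun j hj => ?_
        simp only [map_add, smul_add, add_smul]
        abel
      rw [← key]
      exact W.sub_mem (W.sub_mem h1 h2) h3
    have main : ∀ t, t ≤ i → LinearMap.range (P ^ (k - t)) ≤ W := by
      intro t
      induction t with
      | zero =>
        rintro _ _ ⟨z, rfl⟩
        rw [Nat.sub_zero, hPk, LinearMap.zero_apply]
        exact W.zero_mem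
      | succ t ih =>
        intro hti
        have hIH : LinearMap.range (P ^ (k - t)) ≤ W := ih (by omega)
        have htm : t ≤ m := by omega
        set s := m - t with hs
        obtain ⟨u₀, hu₀⟩ : ∃ u₀, B ((P ^ m) x) u₀ ≠ 0 := by
          by_contra h
          push_neg at h
          exact hxm (hBnd _ h)
        have key : ∀ u z : V,
            B ((P ^ m) x) u • ((P ^ (k - 1 - t)) z)
              + B ((P ^ m) x) z • ((P ^ (k - 1 - t)) u) ∈ W := by
          intro u z
          have hsum := hMW u ((P ^ s) z) x hxW
          have HA : ∀ j ∈ Finset.range k,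
              B x ((P ^ j) u) • ((P ^ (k - 1 - j)) ((P ^ s) z))
              - (if j = m then B ((P ^ m) x) u • ((P ^ (k - 1 - t)) z) else 0) ∈ W := by
            intro j hj
            have hjk : j < k := Finset.mem_range.mp hj
            rw [pow_pow_apply]
            rcases lt_trichotomy j m with hlt | heq | hgt
            · rw [if_neg (by omega), sub_zero]
              refine W.smul_mem _ (hIH ⟨(P ^ (k - 1 - j + s - (k - t))) z, ?_⟩)
              exact ppa P (by omega) z
            · subst heq
              rw [if_pos rfl, ← aux_pow_adj B P hP,
                pow_apply_congr P (show k - 1 - j + s = k - 1 - t by omega) z, sub_self]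
              exact W.zero_mem
            · rw [if_neg (by omega), sub_zero, ← aux_pow_adj B P hP,
                hxzero j (by omega), map_zero, LinearMap.zero_apply, zero_smul]
              exact W.zero_mem
          have HB : ∀ j ∈ Finset.range k,
              B x ((P ^ j) ((P ^ s) z)) • ((P ^ (k - 1 - j)) u)
              - (if j = t then B ((P ^ m) x) z • ((P ^ (k - 1 - t)) u) else 0) ∈ W := by
            intro j hj
            have hjk : j < k := Finset.mem_range.mp hj
            rw [pow_pow_apply]
            rcases lt_trichotomy j t with hlt | heq | hgt
            · rw [if_neg (by omega), sub_zero]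
              refine W.smul_mem _ (hIH ⟨(P ^ (k - 1 - j - (k - t))) u, ?_⟩)
              exact ppa P (by omega) u
            · subst heq
              rw [if_pos rfl, ← aux_pow_adj B P hP,
                pow_apply_congr P (show j + s = m by omega) x, sub_self]
              exact W.zero_mem
            · rw [if_neg (by omega), sub_zero, ← aux_pow_adj B P hP,
                hxzero (j + s) (by omega), map_zero, LinearMap.zero_apply, zero_smul]
              exact W.zero_mem
          have total : (∑ j ∈ Finset.range k,
              ((B x ((P ^ j) u) • ((P ^ (k - 1 - j)) ((P ^ s) z))
                - (if j = m then B ((P ^ m) x) u • ((P ^ (k - 1 - t)) z) else 0))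
              + (B x ((P ^ j) ((P ^ s) z)) • ((P ^ (k - 1 - j)) u)
                - (if j = t then B ((P ^ m) x) z • ((P ^ (k - 1 - t)) u) else 0)))) ∈ W :=
            Submodule.sum_mem W fun j hj => W.add_mem (HA j hj) (HB j hj)
          have e1 : (∑ j ∈ Finset.range k,
              (if j = m then B ((P ^ m) x) u • ((P ^ (k - 1 - t)) z) else 0))
              = B ((P ^ m) x) u • ((P ^ (k - 1 - t)) z) := by
            rw [Finset.sum_ite_eq' (Finset.range k) m
              (fun _ => B ((P ^ m) x) u • ((P ^ (k - 1 - t)) z))]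
            rw [if_pos (Finset.mem_range.mpr hmk)]
          have e2 : (∑ j ∈ Finset.range k,
              (if j = t then B ((P ^ m) x) z • ((P ^ (k - 1 - t)) u) else 0))
              = B ((P ^ m) x) z • ((P ^ (k - 1 - t)) u) := by
            rw [Finset.sum_ite_eq' (Finset.range k) t
              (fun _ => B ((P ^ m) x) z • ((P ^ (k - 1 - t)) u))]
            rw [if_pos (Finset.mem_range.mpr (by omega))]
          have heq : B ((P ^ m) x) u • ((P ^ (k - 1 - t)) z)
              + B ((P ^ m) x) z • ((P ^ (k - 1 - t)) u)
              = (∑ j ∈ Finset.range k,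
                  (B x ((P ^ j) u) • ((P ^ (k - 1 - j)) ((P ^ s) z))
                    + B x ((P ^ j) ((P ^ s) z)) • ((P ^ (k - 1 - j)) u)))
              - (∑ j ∈ Finset.range k,
              ((B x ((P ^ j) u) • ((P ^ (k - 1 - j)) ((P ^ s) z))
                - (if j = m then B ((P ^ m) x) u • ((P ^ (k - 1 - t)) z) else 0))
              + (B x ((P ^ j) ((P ^ s) z)) • ((P ^ (k - 1 - j)) u)
                - (if j = t then B ((P ^ m) x) z • ((P ^ (k - 1 - t)) u) else 0)))) := by
            rw [Finset.sum_add_distrib, Finset.sum_add_distrib, Finset.sum_sub_distrib,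
              Finset.sum_sub_distrib, e1, e2]
            abel
          rw [heq]
          exact W.sub_mem hsum total
        have hu0W : (P ^ (k - 1 - t)) u₀ ∈ W := by
          have h := key u₀ u₀
          have h2 : B ((P ^ m) x) u₀ • ((P ^ (k - 1 - t)) u₀)
              + B ((P ^ m) x) u₀ • ((P ^ (k - 1 - t)) u₀)
              = (2 * B ((P ^ m) x) u₀) • ((P ^ (k - 1 - t)) u₀) := by
            rw [two_mul, add_smul]
          rw [h2] at h
          have h3 := W.smul_mem (2 * B ((P ^ m) x) u₀)⁻¹ h
          rwa [smul_smul, inv_mul_cancel₀ (mul_ne_zero two_ne_zero hu₀), one_smul] at h3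
        rintro _ ⟨z, rfl⟩
        have h := key u₀ z
        have h2 := W.sub_mem h (W.smul_mem (B ((P ^ m) x) z) hu0W)
        rw [add_sub_cancel_right] at h2
        have h3 := W.smul_mem (B ((P ^ m) x) u₀)⁻¹ h2
        rw [smul_smul, inv_mul_cancel₀ hu₀, one_smul] at h3
        rw [show (P ^ (k - (t + 1))) z = (P ^ (k - 1 - t)) z from
          pow_apply_congr P (by omega) z]
        exact h3
    have h1 := main i le_rfl
    have h2 := part1 P k hPk hker i hik
    exact le_antisymm hWi (by rw [h2]; exact h1)
end Main

/-- If `(V, B)` is a nonzero finite-dimensional symplectic space over `K = ℝ` or `ℂ` and `P`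
is a nilpotent `B`-self-adjoint operator all of whose Jordan blocks have size exactly `k`
(i.e. `P^k = 0` and `Ker P ⊆ Im P^(k−1)`), then `Ker P^i = Im P^(k−i)` for `0 ≤ i ≤ k`,
and the invariant subspaces are precisely the subspaces `Ker P^i`, `0 ≤ i ≤ k`. -/
theorem invariant_submodules_of_equal_jordan_blocks
    (K V : Type*) [RCLike K] [AddCommGroup V] [Module K V] [FiniteDimensional K V]
    [Nontrivial V]
    (B : LinearMap.BilinForm K V) (hBalt : B.IsAlt)
    (hBnd : ∀ u : V, (∀ v : V, B u v = 0) → u = 0)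
    (P : Module.End K V) (hP : ∀ u v : V, B (P u) v = B u (P v))
    (k : ℕ) (hPk : P ^ k = 0)
    (hker : LinearMap.ker P ≤ LinearMap.range (P ^ (k - 1))) :
    (∀ i ≤ k, LinearMap.ker (P ^ i) = LinearMap.range (P ^ (k - i))) ∧
    (∀ W : Submodule K V,
      IsInvariantSubmodule B P W ↔ ∃ i ≤ k, W = LinearMap.ker (P ^ i)) := by
  constructor
  · exact part1 P k hPk hker
  · intro W
    constructor
    · exact invariant_eq_ker B P k hBalt hBnd hP hPk hker W
    · rintro ⟨i, hik, rfl⟩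
      exact ker_pow_invariant B P i
end

section
/- Let K be a field (ℝ or ℂ), let k_1 > k_2 > … > k_N ≥ 1 and l_1, …, l_N ≥ 1 be integers, and let P and B be the block-diagonal matrices P = diag(P_1, …, P_N), B = diag(B_1, …, B_N), where P_i is the (2l_i k_i)×(2l_i k_i) matrix, viewed as a k_i × k_i array of 2l_i × 2l_i blocks, with identity blocks E_{2l_i} on the block subdiagonal and zero blocks elsewhere, and B_i is the k_i × k_i array of 2l_i × 2l_i blocks with Q_{2l_i} on the block antidiagonal and zero blocks elsewhere. Then a square matrix X of size Σ_i 2l_i k_i satisfies X P = P X and X^T B + B X = 0 if and only if, writing X in blocks X^{i,j} of size (2l_i k_i) × (2l_j k_j) and each X^{i,j} as a k_i × k_j array of 2l_i × 2l_j blocks X^{i,j}_{a,b}, there exist matrices C^{i,j}_s of size 2l_i × 2l_j for 1 ≤ s ≤ min(k_i, k_j) such that X^{i,j}_{a,b} = C^{i,j}_{a − b − max(0, k_i − k_j) + 1} whenever a − b ≥ max(0, k_i − k_j), X^{i,j}_{a,b} = 0 otherwise, and (C^{j,i}_s)^T Q_{2l_j} + Q_{2l_i} C^{i,j}_s = 0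 for all i, j, s. In particular each diagonal coefficient satisfies (C^{i,i}_s)^T Q_{2l_i} + Q_{2l_i} C^{i,i}_s = 0, i.e. C^{i,i}_s lies in the symplectic Lie algebra sp(2l_i, K). -/
open Matrix

/-- The `2l × 2l` standard symplectic matrix `Q_{2l} = [[0, I_l], [−I_l, 0]]`. -/
def Qmat (K : Type*) [Field K] (l : ℕ) : Matrix (Fin (2 * l)) (Fin (2 * l)) K :=
  fun x y => if (y : ℕ) = (x : ℕ) + l then 1 else if (x : ℕ) = (y : ℕ) + l then -1 else 0

/-- The `(2lk) × (2lk)` matrix, viewed as a `k × k` array of `2l × 2l` blocks, with identity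
blocks `E_{2l}` on the block subdiagonal and zero blocks elsewhere. -/
def Pblk (K : Type*) [Field K] (k l : ℕ) :
    Matrix (Fin k × Fin (2 * l)) (Fin k × Fin (2 * l)) K :=
  fun p q => if (p.1 : ℕ) = (q.1 : ℕ) + 1 ∧ p.2 = q.2 then 1 else 0

/-- The `(2lk) × (2lk)` matrix, viewed as a `k × k` array of `2l × 2l` blocks, with `Q_{2l}`
on the block antidiagonal and zero blocks elsewhere. -/
def Bblk (K : Type*) [Field K] (k l : ℕ) :
    Matrix (Fin k × Fin (2 * l)) (Fin k × Fin (2 * l)) K :=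
  fun p q => if (p.1 : ℕ) + (q.1 : ℕ) + 1 = k then Qmat K l p.2 q.2 else 0

section Helpers

variable {K : Type*} [Field K] {N : ℕ} (k l : Fin N → ℕ)

abbrev ZIdx (k l : Fin N → ℕ) := (i : Fin N) × (Fin (k i) × Fin (2 * l i))

/-- ℕ-indexed block entries of `X`, zero out of range. -/
def ZXe (X : Matrix (ZIdx k l) (ZIdx k l) K) (i j : Fin N) (a b : ℕ) :
    Matrix (Fin (2 * l i)) (Fin (2 * l j)) K :=
  if h : a < k i ∧ b < k j then
    Matrix.of (fun x y => X ⟨i, (⟨a, h.1⟩, x)⟩ ⟨j, (⟨b, h.2⟩, y)⟩) else 0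

lemma ZXe_of_lt (X : Matrix (ZIdx k l) (ZIdx k l) K) {i j : Fin N} {a b : ℕ}
    (ha : a < k i) (hb : b < k j) (x : Fin (2 * l i)) (y : Fin (2 * l j)) :
    ZXe k l X i j a b x y = X ⟨i, (⟨a, ha⟩, x)⟩ ⟨j, (⟨b, hb⟩, y)⟩ := by
  rw [ZXe, dif_pos ⟨ha, hb⟩]; rfl

lemma ZXe_col_oob (X : Matrix (ZIdx k l) (ZIdx k l) K) {i j : Fin N} {a b : ℕ}
    (hb : ¬ b < k j) : ZXe k l X i j a b = 0 := by
  rw [ZXe, dif_neg]; tauto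

lemma mul_P_apply (X : Matrix (ZIdx k l) (ZIdx k l) K) (i j : Fin N)
    (a : Fin (k i)) (b : Fin (k j)) (x : Fin (2 * l i)) (y : Fin (2 * l j)) :
    (X * Matrix.blockDiagonal' (fun i => Pblk K (k i) (l i))) ⟨i, (a, x)⟩ ⟨j, (b, y)⟩
      = ZXe k l X i j (a : ℕ) ((b : ℕ) + 1) x y := by
  rw [Matrix.mul_apply]
  by_cases hb : (b : ℕ) + 1 < k j
  · rw [ZXe_of_lt k l X a.isLt hb]
    rw [Finset.sum_eq_single (⟨j, (⟨(b : ℕ) + 1, hb⟩, y)⟩ : ZIdx k l)]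
    · rw [Matrix.blockDiagonal'_apply_eq]
      simp [Pblk]
    · rintro ⟨j', c, z⟩ - hne
      rcases eq_or_ne j' j with rfl | hjj
      · rw [Matrix.blockDiagonal'_apply_eq]
        have : Pblk K (k j') (l j') (c, z) (b, y) = 0 := by
          simp only [Pblk, ite_eq_right_iff, one_ne_zero]
          rintro ⟨h1, h2⟩
          exact hne (by subst h2; simp [Sigma.ext_iff, Fin.ext_iff, h1])
        rw [this, mul_zero]
      · rw [Matrix.blockDiagonal'_apply_ne _ _ _ hjj, mul_zero]
    · intro h; exact absurd (Finset.mem_univ _) h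
  · rw [ZXe_col_oob k l X hb]
    refine Finset.sum_eq_zero ?_
    rintro ⟨j', c, z⟩ -
    rcases eq_or_ne j' j with rfl | hjj
    · rw [Matrix.blockDiagonal'_apply_eq]
      have : Pblk K (k j') (l j') (c, z) (b, y) = 0 := by
        simp only [Pblk, ite_eq_right_iff, one_ne_zero]
        rintro ⟨h1, -⟩
        exact hb (h1 ▸ c.isLt)
      rw [this, mul_zero]
    · rw [Matrix.blockDiagonal'_apply_ne _ _ _ hjj, mul_zero]

lemma P_mul_apply (X : Matrix (ZIdx k l) (ZIdx k l) K) (i j : Fin N)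
    (a : Fin (k i)) (b : Fin (k j)) (x : Fin (2 * l i)) (y : Fin (2 * l j)) :
    (Matrix.blockDiagonal' (fun i => Pblk K (k i) (l i)) * X) ⟨i, (a, x)⟩ ⟨j, (b, y)⟩
      = if 0 < (a : ℕ) then ZXe k l X i j ((a : ℕ) - 1) (b : ℕ) x y else 0 := by
  rw [Matrix.mul_apply]
  by_cases ha : 0 < (a : ℕ)
  · rw [if_pos ha, ZXe_of_lt k l X (by omega) b.isLt]
    rw [Finset.sum_eq_single (⟨i, (⟨(a : ℕ) - 1, by omega⟩, x)⟩ : ZIdx k l)]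
    · rw [Matrix.blockDiagonal'_apply_eq]
      have : Pblk K (k i) (l i) (a, x) (⟨(a : ℕ) - 1, by omega⟩, x) = 1 := by
        simp only [Pblk]
        rw [if_pos (show _ ∧ _ from ⟨by omega, trivial⟩)]
      rw [this, one_mul]
    · rintro ⟨i', c, z⟩ - hne
      rcases eq_or_ne i i' with rfl | hii
      · rw [Matrix.blockDiagonal'_apply_eq]
        have : Pblk K (k i) (l i) (a, x) (c, z) = 0 := by
          simp only [Pblk, ite_eq_right_iff, one_ne_zero]
          rintro ⟨h1, h2⟩
          exact hne (by subst h2; simp [Sigma.ext_iff, Fin.ext_iff]; omega)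
        rw [this, zero_mul]
      · rw [Matrix.blockDiagonal'_apply_ne _ _ _ hii, zero_mul]
    · intro h; exact absurd (Finset.mem_univ _) h
  · rw [if_neg ha]
    refine Finset.sum_eq_zero ?_
    rintro ⟨i', c, z⟩ -
    rcases eq_or_ne i i' with rfl | hii
    · rw [Matrix.blockDiagonal'_apply_eq]
      have : Pblk K (k i) (l i) (a, x) (c, z) = 0 := by
        simp only [Pblk, ite_eq_right_iff, one_ne_zero]
        rintro ⟨h1, -⟩
        omega
      rw [this, zero_mul]
    · rw [Matrix.blockDiagonal'_apply_ne _ _ _ hii, zero_mul]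


lemma tX_mul_B_apply (X : Matrix (ZIdx k l) (ZIdx k l) K) (i j : Fin N)
    (a : Fin (k i)) (b : Fin (k j)) (x : Fin (2 * l i)) (y : Fin (2 * l j)) :
    (Xᵀ * Matrix.blockDiagonal' (fun i => Bblk K (k i) (l i))) ⟨i, (a, x)⟩ ⟨j, (b, y)⟩
      = ∑ z, ZXe k l X j i (k j - 1 - (b : ℕ)) (a : ℕ) z x * Qmat K (l j) z y := by
  rw [Matrix.mul_apply, ← Finset.univ_sigma_univ, Finset.sum_sigma]
  rw [Finset.sum_eq_single j]
  · rw [Fintype.sum_prod_type]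
    rw [Finset.sum_eq_single (⟨k j - 1 - (b : ℕ), by omega⟩ : Fin (k j))]
    · refine Finset.sum_congr rfl fun z _ => ?_
      rw [Matrix.blockDiagonal'_apply_eq, Matrix.transpose_apply]
      have : Bblk K (k j) (l j) (⟨k j - 1 - (b : ℕ), by omega⟩, z) (b, y)
          = Qmat K (l j) z y := by
        simp only [Bblk]
        rw [if_pos (by omega)]
      rw [this, ZXe_of_lt k l X (by omega) a.isLt]
    · rintro c - hne
      refine Finset.sum_eq_zero fun z _ => ?_
      rw [Matrix.blockDiagonal'_apply_eq]
      have : Bblk K (k j) (l j) (c, z) (b, y) = 0 := by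
        simp only [Bblk]
        rw [if_neg]
        intro h
        exact hne (Fin.ext (show (c : ℕ) = k j - 1 - (b : ℕ) by omega))
      rw [this, mul_zero]
    · intro h; exact absurd (Finset.mem_univ _) h
  · rintro j' - hne
    refine Finset.sum_eq_zero fun p _ => ?_
    rw [Matrix.blockDiagonal'_apply_ne _ _ _ hne, mul_zero]
  · intro h; exact absurd (Finset.mem_univ _) h

lemma B_mul_apply (X : Matrix (ZIdx k l) (ZIdx k l) K) (i j : Fin N)
    (a : Fin (k i)) (b : Fin (k j)) (x : Fin (2 * l i)) (y : Fin (2 * l j)) :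
    (Matrix.blockDiagonal' (fun i => Bblk K (k i) (l i)) * X) ⟨i, (a, x)⟩ ⟨j, (b, y)⟩
      = ∑ z, Qmat K (l i) x z * ZXe k l X i j (k i - 1 - (a : ℕ)) (b : ℕ) z y := by
  rw [Matrix.mul_apply, ← Finset.univ_sigma_univ, Finset.sum_sigma]
  rw [Finset.sum_eq_single i]
  · rw [Fintype.sum_prod_type]
    rw [Finset.sum_eq_single (⟨k i - 1 - (a : ℕ), by omega⟩ : Fin (k i))]
    · refine Finset.sum_congr rfl fun z _ => ?_
      rw [Matrix.blockDiagonal'_apply_eq]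
      have : Bblk K (k i) (l i) (a, x) (⟨k i - 1 - (a : ℕ), by omega⟩, z)
          = Qmat K (l i) x z := by
        simp only [Bblk]
        rw [if_pos (by omega)]
      rw [this, ZXe_of_lt k l X (by omega) b.isLt]
    · rintro c - hne
      refine Finset.sum_eq_zero fun z _ => ?_
      rw [Matrix.blockDiagonal'_apply_eq]
      have : Bblk K (k i) (l i) (a, x) (c, z) = 0 := by
        simp only [Bblk]
        rw [if_neg]
        intro h
        exact hne (Fin.ext (show (c : ℕ) = k i - 1 - (a : ℕ) by omega))
      rw [this, zero_mul]
    · intro h; exact absurd (Finset.mem_univ _) h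
  · rintro i' - hne
    refine Finset.sum_eq_zero fun p _ => ?_
    rw [Matrix.blockDiagonal'_apply_ne _ _ _ (Ne.symm hne), zero_mul]
  · intro h; exact absurd (Finset.mem_univ _) h


/-- Entrywise consequence of `XP = PX`. -/
lemma hE_of (X : Matrix (ZIdx k l) (ZIdx k l) K)
    (hP : X * Matrix.blockDiagonal' (fun i => Pblk K (k i) (l i))
        = Matrix.blockDiagonal' (fun i => Pblk K (k i) (l i)) * X) :
    ∀ (i j : Fin N) (a b : ℕ), a < k i → b < k j → ∀ x y,
      ZXe k l X i j a (b + 1) x y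
        = if 0 < a then ZXe k l X i j (a - 1) b x y else 0 := by
  intro i j a b ha hb x y
  have h3 := congrFun (congrFun hP ⟨i, (⟨a, ha⟩, x)⟩) ⟨j, (⟨b, hb⟩, y)⟩
  rw [mul_P_apply, P_mul_apply] at h3
  exact h3

/-- Matrix-level version of `hE_of`. -/
lemma hEm_of (X : Matrix (ZIdx k l) (ZIdx k l) K)
    (hP : X * Matrix.blockDiagonal' (fun i => Pblk K (k i) (l i))
        = Matrix.blockDiagonal' (fun i => Pblk K (k i) (l i)) * X) :
    ∀ (i j : Fin N) (a b : ℕ), a < k i → b < k j →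
      ZXe k l X i j a (b + 1)
        = if 0 < a then ZXe k l X i j (a - 1) b else 0 := by
  intro i j a b ha hb
  ext x y
  have h := hE_of k l X hP i j a b ha hb x y
  by_cases h0 : 0 < a
  · rw [if_pos h0] at h ⊢; exact h
  · rw [if_neg h0] at h ⊢; rw [Matrix.zero_apply]; exact h

lemma Zlem (X : Matrix (ZIdx k l) (ZIdx k l) K)
    (hEm : ∀ (i j : Fin N) (a b : ℕ), a < k i → b < k j →
      ZXe k l X i j a (b + 1) = if 0 < a then ZXe k l X i j (a - 1) b else 0) :
    ∀ (n : ℕ) (i j : Fin N) (a b : ℕ), a < k i → b < k j → k j - b ≤ n →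
      a + k j < k i + b → ZXe k l X i j a b = 0 := by
  intro n
  induction n with
  | zero => intro i j a b ha hb hn hc; omega
  | succ m ih =>
    intro i j a b ha hb hn hc
    have key := hEm i j (a + 1) b (by omega) hb
    rw [if_pos (Nat.succ_pos a), Nat.add_sub_cancel] at key
    by_cases hb1 : b + 1 < k j
    · rw [← key]; exact ih i j (a + 1) (b + 1) (by omega) hb1 (by omega) (by omega)
    · rw [← key]; exact ZXe_col_oob k l X hb1

lemma downlem (X : Matrix (ZIdx k l) (ZIdx k l) K)
    (hEm : ∀ (i j : Fin N) (a b : ℕ), a < k i → b < k j →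
      ZXe k l X i j a (b + 1) = if 0 < a then ZXe k l X i j (a - 1) b else 0) :
    ∀ (t : ℕ) (i j : Fin N) (a b : ℕ), a < k i → b < k j → t ≤ a → t ≤ b →
      ZXe k l X i j a b = ZXe k l X i j (a - t) (b - t) := by
  intro t
  induction t with
  | zero => intro i j a b _ _ _ _; rfl
  | succ m ih =>
    intro i j a b ha hb hta htb
    rw [ih i j a b ha hb (by omega) (by omega)]
    have h := hEm i j (a - m) (b - m - 1) (by omega) (by omega)
    rw [show b - m - 1 + 1 = b - m by omega, if_pos (by omega : 0 < a - m)] at h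
    rw [h, show a - m - 1 = a - (m + 1) by omega, show b - m - 1 = b - (m + 1) by omega]

lemma zfull (X : Matrix (ZIdx k l) (ZIdx k l) K)
    (hEm : ∀ (i j : Fin N) (a b : ℕ), a < k i → b < k j →
      ZXe k l X i j a (b + 1) = if 0 < a then ZXe k l X i j (a - 1) b else 0) :
    ∀ (i j : Fin N) (a b : ℕ), a < k i → b < k j →
      ¬ (b + (k i - k j) ≤ a) → ZXe k l X i j a b = 0 := by
  intro i j a b ha hb hc
  by_cases hab : a < b
  · rw [downlem k l X hEm a i j a b ha hb le_rfl (by omega), Nat.sub_self]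
    have h := hEm i j 0 (b - a - 1) (by omega) (by omega)
    rw [show b - a - 1 + 1 = b - a by omega, if_neg (by omega)] at h
    exact h
  · exact Zlem k l X hEm (k j - b) i j a b ha hb le_rfl (by omega)

lemma toeplem (X : Matrix (ZIdx k l) (ZIdx k l) K)
    (hEm : ∀ (i j : Fin N) (a b : ℕ), a < k i → b < k j →
      ZXe k l X i j a (b + 1) = if 0 < a then ZXe k l X i j (a - 1) b else 0) :
    ∀ (i j : Fin N) (a b : ℕ), a < k i → b < k j →
      ZXe k l X i j a b
        = if b + (k i - k j) ≤ a then ZXe k l X i j (a - b) 0 else 0 := by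
  intro i j a b ha hb
  by_cases hc : b + (k i - k j) ≤ a
  · rw [if_pos hc, downlem k l X hEm b i j a b ha hb (by omega) le_rfl, Nat.sub_self]
  · rw [if_neg hc]; exact zfull k l X hEm i j a b ha hb hc

/-- Entrywise consequence of `XᵀB + BX = 0`. -/
lemma hBE_of (X : Matrix (ZIdx k l) (ZIdx k l) K)
    (hB : Xᵀ * Matrix.blockDiagonal' (fun i => Bblk K (k i) (l i))
        + Matrix.blockDiagonal' (fun i => Bblk K (k i) (l i)) * X = 0) :
    ∀ (i j : Fin N) (a b : ℕ), a < k i → b < k j → ∀ x y,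
      (∑ z, ZXe k l X j i (k j - 1 - b) a z x * Qmat K (l j) z y)
        + (∑ z, Qmat K (l i) x z * ZXe k l X i j (k i - 1 - a) b z y) = 0 := by
  intro i j a b ha hb x y
  have h3 := congrFun (congrFun hB ⟨i, (⟨a, ha⟩, x)⟩) ⟨j, (⟨b, hb⟩, y)⟩
  rw [Matrix.add_apply, tX_mul_B_apply, B_mul_apply] at h3
  exact h3

end Helpers

/-- **The Lie algebra of the automorphism group of `(B, P)` (P. Zhang).**
With `P = diag(P_1, …, P_N)` and `B = diag(B_1, …, B_N)` built from `l i` Jordan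
`k i`-blocks with eigenvalue `0` (`k 0 > k 1 > … > k (N−1)`), a matrix `X` satisfies
`XP = PX` and `XᵀB + BX = 0` iff its blocks `X^{i,j}` are block-Toeplitz, lower-triangular
after a shift by `max (0, k i − k j)`, with coefficients `C^{i,j}_s` (here indexed by
`s = 0, …, min (k i) (k j) − 1`) satisfying `(C^{j,i}_s)ᵀ Q_{2l_j} + Q_{2l_i} C^{i,j}_s = 0`;
in particular the diagonal coefficients `C^{i,i}_s` lie in `sp(2l_i, K)`. -/
theorem automorphism_algebra_jordan_case
    (K : Type*) [RCLike K]
    {N : ℕ} (k l : Fin N → ℕ) (hk1 : ∀ i, 1 ≤ k i) (hl1 : ∀ i, 1 ≤ l i)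
    (hdec : StrictAnti k)
    (X : Matrix ((i : Fin N) × (Fin (k i) × Fin (2 * l i)))
      ((i : Fin N) × (Fin (k i) × Fin (2 * l i))) K) :
    (X * Matrix.blockDiagonal' (fun i => Pblk K (k i) (l i))
        = Matrix.blockDiagonal' (fun i => Pblk K (k i) (l i)) * X ∧
      Xᵀ * Matrix.blockDiagonal' (fun i => Bblk K (k i) (l i))
        + Matrix.blockDiagonal' (fun i => Bblk K (k i) (l i)) * X = 0) ↔
    ∃ C : (i j : Fin N) → ℕ → Matrix (Fin (2 * l i)) (Fin (2 * l j)) K,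
      (∀ (i j : Fin N) (a : Fin (k i)) (b : Fin (k j))
          (x : Fin (2 * l i)) (y : Fin (2 * l j)),
        X ⟨i, (a, x)⟩ ⟨j, (b, y)⟩ =
          if (b : ℕ) + (k i - k j) ≤ (a : ℕ) then
            C i j ((a : ℕ) - (b : ℕ) - (k i - k j)) x y
          else 0) ∧
      (∀ (i j : Fin N) (s : ℕ), s < min (k i) (k j) →
        (C j i s)ᵀ * Qmat K (l j) + Qmat K (l i) * C i j s = 0) ∧
      (∀ (i : Fin N) (s : ℕ), s < k i →
        (C i i s)ᵀ * Qmat K (l i) + Qmat K (l i) * C i i s = 0) := by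
  constructor
  · rintro ⟨hP, hB⟩
    have hEm := hEm_of k l X hP
    set C : (i j : Fin N) → ℕ → Matrix (Fin (2 * l i)) (Fin (2 * l j)) K :=
      fun i j s => ZXe k l X i j (s + (k i - k j)) 0 with hCdef
    have hC2 : ∀ (i j : Fin N) (s : ℕ), s < min (k i) (k j) →
        (C j i s)ᵀ * Qmat K (l j) + Qmat K (l i) * C i j s = 0 := by
      intro i j s hs
      have hki := hk1 i; have hkj := hk1 j
      obtain ⟨m, hm⟩ : ∃ m, min (k i) (k j) = m := ⟨_, rfl⟩
      rw [hm] at hs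
      have hm1 : m ≤ k i := hm ▸ min_le_left _ _
      have hm2 : m ≤ k j := hm ▸ min_le_right _ _
      have hor : m = k i ∨ m = k j := hm ▸ min_choice _ _
      have ha : m - 1 - s < k i := by omega
      ext x y
      have hb3 := hBE_of k l X hB i j (m - 1 - s) 0 ha (by omega) x y
      have e1 : ZXe k l X j i (k j - 1 - 0) (m - 1 - s)
          = ZXe k l X j i (s + (k j - k i)) 0 := by
        rw [toeplem k l X hEm j i (k j - 1 - 0) (m - 1 - s)
          (by omega) (by omega), if_pos (by omega),
          show k j - 1 - 0 - (m - 1 - s) = s + (k j - k i) by omega]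
      have e2 : ZXe k l X i j (k i - 1 - (m - 1 - s)) 0
          = ZXe k l X i j (s + (k i - k j)) 0 := by
        rw [toeplem k l X hEm i j (k i - 1 - (m - 1 - s)) 0
          (by omega) (by omega), if_pos (by omega),
          show k i - 1 - (m - 1 - s) - 0 = s + (k i - k j) by omega]
      rw [e1, e2] at hb3
      rw [Matrix.add_apply, Matrix.mul_apply, Matrix.mul_apply, Matrix.zero_apply]
      simp only [Matrix.transpose_apply]
      exact hb3
    refine ⟨C, ?_, hC2, fun i s hs => hC2 i i s (by rw [min_self]; exact hs)⟩
    intro i j a b x y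
    have hX : X ⟨i, (a, x)⟩ ⟨j, (b, y)⟩ = ZXe k l X i j (a : ℕ) (b : ℕ) x y :=
      (ZXe_of_lt k l X a.isLt b.isLt x y).symm
    rw [hX, toeplem k l X hEm i j (a : ℕ) (b : ℕ) a.isLt b.isLt]
    by_cases hc : (b : ℕ) + (k i - k j) ≤ (a : ℕ)
    · rw [if_pos hc, if_pos hc]
      have harith : (a : ℕ) - (b : ℕ) - (k i - k j) + (k i - k j) = (a : ℕ) - (b : ℕ) := by
        omega
      exact (congrFun (congrFun (congrArg (fun t => ZXe k l X i j t 0) harith) x) y).symm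
    · rw [if_neg hc, if_neg hc]
      rfl
  · rintro ⟨C, h1, h2, -⟩
    have XeC : ∀ (i j : Fin N) (a b : ℕ) (ha : a < k i) (hb : b < k j),
        ZXe k l X i j a b
          = if b + (k i - k j) ≤ a then C i j (a - b - (k i - k j)) else 0 := by
      intro i j a b ha hb
      ext x y
      have h1' : X ⟨i, (⟨a, ha⟩, x)⟩ ⟨j, (⟨b, hb⟩, y)⟩
          = if b + (k i - k j) ≤ a then C i j (a - b - (k i - k j)) x y else 0 :=
        h1 i j ⟨a, ha⟩ ⟨b, hb⟩ x y
      rw [ZXe_of_lt k l X ha hb, h1']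
      by_cases hc : b + (k i - k j) ≤ a
      · rw [if_pos hc, if_pos hc]
      · rw [if_neg hc, if_neg hc]; rfl
    constructor
    · ext ⟨i, a, x⟩ ⟨j, b, y⟩
      rw [mul_P_apply, P_mul_apply]
      have haa := a.isLt; have hbb := b.isLt
      by_cases hb1 : (b : ℕ) + 1 < k j
      · rw [XeC i j (a : ℕ) ((b : ℕ) + 1) a.isLt hb1]
        by_cases h0 : 0 < (a : ℕ)
        · rw [if_pos h0, XeC i j ((a : ℕ) - 1) (b : ℕ) (by omega) b.isLt]
          by_cases hc : (b : ℕ) + 1 + (k i - k j) ≤ (a : ℕ)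
          · rw [if_pos hc, if_pos (by omega : (b : ℕ) + (k i - k j) ≤ (a : ℕ) - 1)]
            have : (a : ℕ) - ((b : ℕ) + 1) - (k i - k j)
                = (a : ℕ) - 1 - (b : ℕ) - (k i - k j) := by omega
            rw [this]
          · rw [if_neg hc, if_neg (by omega : ¬ ((b : ℕ) + (k i - k j) ≤ (a : ℕ) - 1))]
        · rw [if_neg h0, if_neg (by omega : ¬ ((b : ℕ) + 1 + (k i - k j) ≤ (a : ℕ)))]
          rfl
      · rw [ZXe_col_oob k l X hb1]
        by_cases h0 : 0 < (a : ℕ)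
        · rw [if_pos h0, XeC i j ((a : ℕ) - 1) (b : ℕ) (by omega) b.isLt,
            if_neg (by omega : ¬ ((b : ℕ) + (k i - k j) ≤ (a : ℕ) - 1))]
        · rw [if_neg h0]
          rfl
    · ext ⟨i, a, x⟩ ⟨j, b, y⟩
      rw [Matrix.add_apply, tX_mul_B_apply, B_mul_apply, Matrix.zero_apply]
      have haa := a.isLt; have hbb := b.isLt
      have hki := hk1 i; have hkj := hk1 j
      rw [XeC j i (k j - 1 - (b : ℕ)) (a : ℕ) (by omega) a.isLt,
        XeC i j (k i - 1 - (a : ℕ)) (b : ℕ) (by omega) b.isLt]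
      obtain ⟨m, hm⟩ : ∃ m, min (k i) (k j) = m := ⟨_, rfl⟩
      have hm1 : m ≤ k i := hm ▸ min_le_left _ _
      have hm2 : m ≤ k j := hm ▸ min_le_right _ _
      have hor : m = k i ∨ m = k j := hm ▸ min_choice _ _
      by_cases hc : (a : ℕ) + (k j - k i) ≤ k j - 1 - (b : ℕ)
      · rw [if_pos hc, if_pos (by omega : (b : ℕ) + (k i - k j) ≤ k i - 1 - (a : ℕ))]
        have e : k j - 1 - (b : ℕ) - (a : ℕ) - (k j - k i)
            = m - 1 - ((a : ℕ) + (b : ℕ)) := by omega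
        have e' : k i - 1 - (a : ℕ) - (b : ℕ) - (k i - k j)
            = m - 1 - ((a : ℕ) + (b : ℕ)) := by omega
        rw [e, e']
        have hs : m - 1 - ((a : ℕ) + (b : ℕ)) < min (k i) (k j) := by
          rw [hm]; omega
        have h2' := congrFun (congrFun (h2 i j _ hs) x) y
        rw [Matrix.add_apply, Matrix.mul_apply, Matrix.mul_apply, Matrix.zero_apply] at h2'
        simp only [Matrix.transpose_apply] at h2'
        exact h2'
      · rw [if_neg hc, if_neg (by omega : ¬ ((b : ℕ) + (k i - k j) ≤ k i - 1 - (a : ℕ)))]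
        simp
end

section
/- Let K be the field ℝ or ℂ, (V, B) a finite-dimensional symplectic vector space over K, and P : V → V a nilpotent operator self-adjoint with respect to B. Suppose V = ⊕_{i=1}^N V_i is a B-orthogonal, P-invariant decomposition into nonzero subspaces such that, for each i, all Jordan blocks of P|_{V_i} have size exactly k_i (i.e. (P|_{V_i})^{k_i} = 0 and Ker(P|_{V_i}) ⊆ Im((P|_{V_i})^{k_i − 1})), with k_1 > k_2 > … > k_N. Let W be a subspace invariant under Aut(V, B, P), and suppose W contains a vector v ∈ V_j ∩ Ker P^k with v ∉ Ker P^{k−1}, where k ≥ 1. Then V_i ∩ Ker P^k ⊆ W for every i with k_i > k_j. -/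
/-- If a nilpotent endomorphism has all Jordan blocks of size (at least) `KK`
(i.e. `ker Q ≤ range Q^(KK-1)`), then `ker (Q^s) ≤ range (Q^(KK-s))` for `s ≤ KK`. -/
lemma aux_ker_le_range {K M : Type*} [Field K] [AddCommGroup M] [Module K M]
    (Q : Module.End K M) (KK : ℕ)
    (h2 : LinearMap.ker Q ≤ LinearMap.range (Q ^ (KK - 1))) :
    ∀ s, s ≤ KK → LinearMap.ker (Q ^ s) ≤ LinearMap.range (Q ^ (KK - s)) := by
  intro s
  induction s with
  | zero =>
    intro _ z hz
    rw [LinearMap.mem_ker, pow_zero, Module.End.one_apply] at hz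
    subst hz
    exact Submodule.zero_mem _
  | succ s ih =>
    intro hs z hz
    have hsKK : s ≤ KK := Nat.le_of_succ_le hs
    have h1 : Q ((Q ^ s) z) = 0 := by
      have h : (Q ^ (s + 1)) z = 0 := LinearMap.mem_ker.mp hz
      rwa [pow_succ', Module.End.mul_apply] at h
    obtain ⟨w, hw⟩ := h2 (LinearMap.mem_ker.mpr h1)
    have hsplit : (Q ^ (KK - 1)) w = (Q ^ s) ((Q ^ (KK - 1 - s)) w) := by
      rw [← Module.End.mul_apply, ← pow_add]
      have e : s + (KK - 1 - s) = KK - 1 := by omega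
      rw [e]
    have h3 : (Q ^ s) (z - (Q ^ (KK - 1 - s)) w) = 0 := by
      rw [map_sub, ← hsplit, hw, sub_self]
    obtain ⟨w2, hw2⟩ := ih hsKK (LinearMap.mem_ker.mpr h3)
    refine ⟨Q w2 + w, ?_⟩
    have e1 : (Q ^ (KK - (s + 1))) (Q w2) = (Q ^ (KK - s)) w2 := by
      rw [← Module.End.mul_apply (Q ^ _) Q, ← pow_succ]
      have e : KK - (s + 1) + 1 = KK - s := by omega
      rw [e]
    have e2 : (Q ^ (KK - (s + 1))) w = (Q ^ (KK - 1 - s)) w := by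
      have e : KK - (s + 1) = KK - 1 - s := by omega
      rw [e]
    rw [map_add, e1, e2, hw2]
    abel

theorem invariant_submodule_contains_kernel_levels
    (K V : Type*) [RCLike K] [AddCommGroup V] [Module K V] [FiniteDimensional K V]
    (B : LinearMap.BilinForm K V) (hBalt : B.IsAlt)
    (hBnd : ∀ u : V, (∀ v : V, B u v = 0) → u = 0)
    (P : Module.End K V) (hP : ∀ u v : V, B (P u) v = B u (P v))
    (hnil : IsNilpotent P)
    {N : ℕ} (Vs : Fin (N + 1) → Submodule K V) (hne : ∀ i, Vs i ≠ ⊥)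
    (horth : ∀ i j, i ≠ j → ∀ u ∈ Vs i, ∀ v ∈ Vs j, B u v = 0)
    (hPVs : ∀ i, ∀ x ∈ Vs i, P x ∈ Vs i)
    (hindep : iSupIndep Vs) (hsup : ⨆ i, Vs i = ⊤)
    (k : Fin (N + 1) → ℕ) (hdec : StrictAnti k)
    (hblk : ∀ i, (P.restrict (hPVs i)) ^ (k i) = 0 ∧
      LinearMap.ker (P.restrict (hPVs i))
        ≤ LinearMap.range ((P.restrict (hPVs i)) ^ (k i - 1)))
    (W : Submodule K V) (hW : IsInvariantSubmodule B P W)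
    (j : Fin (N + 1)) (kk : ℕ) (hkk : 1 ≤ kk) (v : V)
    (hvW : v ∈ W) (hvV : v ∈ Vs j) (hvKer : v ∈ LinearMap.ker (P ^ kk))
    (hv' : v ∉ LinearMap.ker (P ^ (kk - 1))) :
    ∀ i : Fin (N + 1), k j < k i → Vs i ⊓ LinearMap.ker (P ^ kk) ≤ W := by
  intro i hki x hx
  have hxVi : x ∈ Vs i := hx.1
  have hxker : (P ^ kk) x = 0 := LinearMap.mem_ker.mp hx.2
  have hij : i ≠ j := by rintro rfl; exact lt_irrefl _ hki
  have hji : j ≠ i := hij.symm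
  -- basic facts about v
  have hPkkv : (P ^ kk) v = 0 := LinearMap.mem_ker.mp hvKer
  have hP1v : (P ^ (kk - 1)) v ≠ 0 := fun h => hv' (LinearMap.mem_ker.mpr h)
  -- powers of P move through B
  have hPs : ∀ (r : ℕ) (u w : V), B ((P ^ r) u) w = B u ((P ^ r) w) := by
    intro r
    induction r with
    | zero => intro u w; simp
    | succ r ih =>
      intro u w
      have e1 : (P ^ (r + 1)) u = (P ^ r) (P u) := by
        rw [pow_succ, Module.End.mul_apply]
      have e2 : (P ^ (r + 1)) w = P ((P ^ r) w) := by
        rw [pow_succ', Module.End.mul_apply]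
      rw [e1, e2, ih (P u) w, ← hP]
  -- self-pairings along P-chains vanish
  have hself : ∀ (r : ℕ) (u : V), B u ((P ^ r) u) = 0 := by
    intro r u
    have h1 : B ((P ^ r) u) u = B u ((P ^ r) u) := hPs r u u
    have h2 : -B ((P ^ r) u) u = B u ((P ^ r) u) := LinearMap.IsAlt.neg hBalt _ _
    have h3 : B u ((P ^ r) u) + B u ((P ^ r) u) = 0 := by
      nth_rewrite 1 [← h1]
      rw [← h2]; abel
    have h4 : (2 : K) * B u ((P ^ r) u) = 0 := by rw [two_mul]; exact h3
    rcases mul_eq_zero.mp h4 with h | h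
    · exact absurd h two_ne_zero
    · exact h
  -- antisymmetry
  have hanti : ∀ z w : V, B z w = -B w z := fun z w => (LinearMap.IsAlt.neg hBalt w z).symm
  -- P-powers stay in pieces
  have hPmem : ∀ (l : Fin (N + 1)) (r : ℕ) (z : V), z ∈ Vs l → (P ^ r) z ∈ Vs l := by
    intro l r
    induction r with
    | zero => intro z hz; simpa using hz
    | succ r ih =>
      intro z hz
      have e : (P ^ (r + 1)) z = P ((P ^ r) z) := by rw [pow_succ', Module.End.mul_apply]
      rw [e]
      exact hPVs l _ (ih z hz)
  -- zero after restriction facts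
  have hblk1 : ∀ (l : Fin (N + 1)) (z : V), z ∈ Vs l → (P ^ (k l)) z = 0 := by
    intro l z hz
    have h1 := (hblk l).1
    have h2 : ((P.restrict (hPVs l)) ^ (k l)) ⟨z, hz⟩ = 0 := by rw [h1]; rfl
    rw [Module.End.pow_restrict] at h2
    simpa [LinearMap.restrict_apply, Subtype.ext_iff] using h2
  -- kk ≤ k j
  have hkkj : kk ≤ k j := by
    by_contra h
    push_neg at h
    apply hP1v
    have e : (P ^ (kk - 1)) v = (P ^ (kk - 1 - k j)) ((P ^ (k j)) v) := by
      rw [← Module.End.mul_apply, ← pow_add]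
      have e' : kk - 1 - k j + k j = kk - 1 := by omega
      rw [e']
    rw [e, hblk1 j v hvV, map_zero]
  have hkki : kk ≤ k i := le_trans hkkj (le_of_lt hki)
  have hvz : ∀ e : ℕ, kk ≤ e → (P ^ e) v = 0 := by
    intro e he
    have h : (P ^ e) v = (P ^ (e - kk)) ((P ^ kk) v) := by
      rw [← Module.End.mul_apply, ← pow_add]
      have e' : e - kk + kk = e := by omega
      rw [e']
    rw [h, hPkkv, map_zero]
  -- a functional vanishing on all pieces vanishes
  have hker_top : ∀ u0 : V, u0 ∈ Vs j → (∀ z ∈ Vs j, B u0 z = 0) → u0 = 0 := by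
    intro u0 hu0 hz
    apply hBnd
    intro w
    have hw : w ∈ (⊤ : Submodule K V) := trivial
    rw [← hsup] at hw
    have hle : ∀ l, Vs l ≤ LinearMap.ker (B u0) := by
      intro l z' hz'
      rw [LinearMap.mem_ker]
      by_cases hlj : l = j
      · subst hlj; exact hz _ hz'
      · exact horth j l (Ne.symm hlj) u0 hu0 _ hz'
    exact LinearMap.mem_ker.mp ((iSup_le hle) hw)
  -- construct the dual chain vector a ∈ Vs j
  obtain ⟨a, haV, haB⟩ :
      ∃ a ∈ Vs j, ∀ s, s < kk → B ((P ^ s) v) a = if s = kk - 1 then 1 else 0 := by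
    set Φ : V →ₗ[K] (Fin kk → K) := LinearMap.pi (fun s : Fin kk => B ((P ^ (s : ℕ)) v)) with hΦ
    have hΦapp : ∀ (z : V) (s : Fin kk), Φ z s = B ((P ^ (s : ℕ)) v) z := fun z s => rfl
    set p : Submodule K (Fin kk → K) := (Vs j).map Φ with hp
    have hptop : p = ⊤ := by
      by_contra hne'
      obtain ⟨f, hf0, hfbot⟩ :=
        Submodule.exists_dual_map_eq_bot_of_lt_top (lt_top_iff_ne_top.mpr hne') inferInstance
      set lam : Fin kk → K := fun s => f (fun t => if s = t then 1 else 0) with hlamdef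
      have hfx : ∀ x' : Fin kk → K, f x' = ∑ s, x' s * lam s := by
        intro x'
        rw [LinearMap.pi_apply_eq_sum_univ f x']
        simp [hlamdef, smul_eq_mul]
      set u0 : V := ∑ s : Fin kk, lam s • (P ^ (s : ℕ)) v with hu0
      have hu0V : u0 ∈ Vs j := by
        apply Submodule.sum_mem
        intro s _
        exact Submodule.smul_mem _ _ (hPmem j s v hvV)
      have hu0perp : ∀ z ∈ Vs j, B u0 z = 0 := by
        intro z hz
        have h1 : B u0 z = ∑ s : Fin kk, lam s * B ((P ^ (s : ℕ)) v) z := by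
          rw [hu0]
          rw [map_sum]
          rw [LinearMap.sum_apply]
          apply Finset.sum_congr rfl
          intro s _
          rw [map_smul, LinearMap.smul_apply, smul_eq_mul]
        have h2 : Φ z ∈ LinearMap.ker f := by
          have : Φ z ∈ p := ⟨z, hz, rfl⟩
          have hbot := hfbot
          rw [Submodule.eq_bot_iff] at hbot
          have := hbot (f (Φ z)) ⟨Φ z, this, rfl⟩
          exact LinearMap.mem_ker.mpr this
        have h3 : f (Φ z) = 0 := LinearMap.mem_ker.mp h2
        rw [hfx] at h3
        rw [h1]
        rw [← h3]
        apply Finset.sum_congr rfl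
        intro s _
        rw [hΦapp]
        ring
      have hu0z : u0 = 0 := hker_top u0 hu0V hu0perp
      -- independence: all lam vanish
      have hlam : ∀ n : ℕ, ∀ hn : n < kk, lam ⟨n, hn⟩ = 0 := by
        intro n
        induction n using Nat.strong_induction_on with
        | _ n ih =>
          intro hn
          have h0 : (P ^ (kk - 1 - n)) u0 = 0 := by rw [hu0z, map_zero]
          rw [hu0, map_sum] at h0
          have hterm : ∀ s : Fin kk, s ∈ Finset.univ → s ≠ ⟨n, hn⟩ →
              (P ^ (kk - 1 - n)) (lam s • (P ^ (s : ℕ)) v) = 0 := by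
            intro s _ hs
            rw [map_smul]
            rcases lt_or_ge (s : ℕ) n with h | h
            · have hz : lam s = 0 := by
                have := ih s h s.2
                simpa using this
              rw [hz, zero_smul]
            · have hne2 : (s : ℕ) ≠ n := by
                intro he
                apply hs
                apply Fin.ext
                simp only [Fin.val_mk]
                exact he
              have hgt : n < (s : ℕ) := lt_of_le_of_ne h (Ne.symm hne2)
              have hz : (P ^ (kk - 1 - n)) ((P ^ (s : ℕ)) v) = 0 := by
                rw [← Module.End.mul_apply, ← pow_add]
                exact hvz _ (by omega)
              rw [hz, smul_zero]
          have hsingle := Finset.sum_eq_single_of_mem (⟨n, hn⟩ : Fin kk)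
            (Finset.mem_univ _) hterm
          rw [hsingle] at h0
          rw [map_smul] at h0
          have hexp : (P ^ (kk - 1 - n)) ((P ^ ((⟨n, hn⟩ : Fin kk) : ℕ)) v)
              = (P ^ (kk - 1)) v := by
            rw [← Module.End.mul_apply, ← pow_add]
            have e : kk - 1 - n + (((⟨n, hn⟩ : Fin kk) : ℕ)) = kk - 1 := by
              simp only [Fin.val_mk]; omega
            rw [e]
          rw [hexp] at h0
          exact (smul_eq_zero.mp h0).resolve_right hP1v
      apply hf0
      apply LinearMap.ext
      intro x'
      rw [hfx x']
      have : ∀ s : Fin kk, lam s = 0 := by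
        intro s
        have := hlam s s.2
        simpa using this
      simp [this]
    have ht : (fun s : Fin kk => if (s : ℕ) = kk - 1 then (1 : K) else 0) ∈ p := by
      rw [hptop]; trivial
    obtain ⟨a, haV, haΦ⟩ := ht
    refine ⟨a, haV, ?_⟩
    intro s hs
    have := congrFun haΦ ⟨s, hs⟩
    rw [hΦapp] at this
    simpa using this
  -- construct y ∈ Vs i with P^(k i - kk) y = x
  obtain ⟨y, hyV, hy⟩ : ∃ y, y ∈ Vs i ∧ (P ^ (k i - kk)) y = x := by
    have h2 := (hblk i).2
    have hlem := aux_ker_le_range (P.restrict (hPVs i)) (k i) h2 kk hkki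
    have hxmem : (⟨x, hxVi⟩ : Vs i) ∈ LinearMap.ker ((P.restrict (hPVs i)) ^ kk) := by
      rw [LinearMap.mem_ker, Module.End.pow_restrict]
      apply Subtype.val_injective
      simpa [LinearMap.restrict_apply] using hxker
    obtain ⟨y', hy'⟩ := hlem hxmem
    rw [Module.End.pow_restrict] at hy'
    refine ⟨(y' : V), y'.2, ?_⟩
    simpa [LinearMap.restrict_apply, Subtype.ext_iff] using hy'
  have hPkiy : (P ^ (k i)) y = 0 := hblk1 i y hyV
  have hPkia : (P ^ (k i)) a = 0 := by
    have e : (P ^ (k i)) a = (P ^ (k i - k j)) ((P ^ (k j)) a) := by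
      rw [← Module.End.mul_apply, ← pow_add]
      have e' : k i - k j + k j = k i := by omega
      rw [e']
    rw [e, hblk1 j a haV, map_zero]
  have hki1 : 1 ≤ k i := by omega
  -- the transvection-like map S
  set S : V →ₗ[K] V := ∑ s ∈ Finset.range (k i),
      (((B.flip ((P ^ s) a)).smulRight ((P ^ (k i - 1 - s)) y)) +
        ((B.flip ((P ^ s) y)).smulRight ((P ^ (k i - 1 - s)) a))) with hSdef
  have hSapp : ∀ w : V, S w = ∑ s ∈ Finset.range (k i),
      (B w ((P ^ s) a) • (P ^ (k i - 1 - s)) y + B w ((P ^ s) y) • (P ^ (k i - 1 - s)) a) := by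
    intro w
    rw [hSdef]
    rw [LinearMap.sum_apply]
    apply Finset.sum_congr rfl
    intro s _
    rfl
  -- S v = x
  have hSv : S v = x := by
    rw [hSapp]
    have hterm : ∀ s ∈ Finset.range (k i),
        (B v ((P ^ s) a) • (P ^ (k i - 1 - s)) y + B v ((P ^ s) y) • (P ^ (k i - 1 - s)) a)
        = if s = kk - 1 then (P ^ (k i - kk)) y else 0 := by
      intro s hs
      have h2 : B v ((P ^ s) y) = 0 := horth j i hji v hvV _ (hPmem i s y hyV)
      have h1 : B v ((P ^ s) a) = if s = kk - 1 then 1 else 0 := by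
        rw [← hPs s v a]
        by_cases hskk : s < kk
        · exact haB s hskk
        · rw [hvz s (by omega), map_zero, LinearMap.zero_apply, if_neg (by omega)]
      rw [h1, h2, zero_smul, add_zero]
      by_cases hskk : s = kk - 1
      · rw [if_pos hskk, if_pos hskk, one_smul]
        have e : k i - 1 - s = k i - kk := by omega
        rw [e]
      · rw [if_neg hskk, if_neg hskk, zero_smul]
    rw [Finset.sum_congr rfl hterm]
    rw [Finset.sum_ite_eq' (Finset.range (k i)) (kk - 1)
      (fun _ => (P ^ (k i - kk)) y)]
    rw [if_pos (Finset.mem_range.mpr (by omega))]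
    exact hy
  -- S commutes with P
  have hScomm : ∀ w : V, S (P w) = P (S w) := by
    intro w
    set F : ℕ → V := fun s =>
      B w ((P ^ s) a) • (P ^ (k i - s)) y + B w ((P ^ s) y) • (P ^ (k i - s)) a with hF
    have hL : S (P w) = ∑ s ∈ Finset.range (k i), F (s + 1) := by
      rw [hSapp]
      apply Finset.sum_congr rfl
      intro s hs
      have hs' : s < k i := Finset.mem_range.mp hs
      have e1 : B (P w) ((P ^ s) a) = B w ((P ^ (s + 1)) a) := by
        rw [hP, ← Module.End.mul_apply, ← pow_succ']
      have e2 : B (P w) ((P ^ s) y) = B w ((P ^ (s + 1)) y) := by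
        rw [hP, ← Module.End.mul_apply, ← pow_succ']
      have e3 : k i - 1 - s = k i - (s + 1) := by omega
      rw [e1, e2, hF]
      simp only [e3]
    have hR : P (S w) = ∑ s ∈ Finset.range (k i), F s := by
      rw [hSapp, map_sum]
      apply Finset.sum_congr rfl
      intro s hs
      have hs' : s < k i := Finset.mem_range.mp hs
      rw [map_add, map_smul, map_smul]
      have e1 : P ((P ^ (k i - 1 - s)) y) = (P ^ (k i - s)) y := by
        rw [← Module.End.mul_apply, ← pow_succ']
        have e : k i - 1 - s + 1 = k i - s := by omega
        rw [e]
      have e2 : P ((P ^ (k i - 1 - s)) a) = (P ^ (k i - s)) a := by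
        rw [← Module.End.mul_apply, ← pow_succ']
        have e : k i - 1 - s + 1 = k i - s := by omega
        rw [e]
      rw [e1, e2]
    rw [hL, hR]
    have hF0 : F 0 = 0 := by
      rw [hF]
      simp only [pow_zero, Nat.sub_zero]
      rw [hPkiy, hPkia, smul_zero, smul_zero, add_zero]
    have hFtop : F (k i) = 0 := by
      rw [hF]
      simp only [Nat.sub_self, pow_zero]
      rw [hPkiy, hPkia]
      simp
    have h1 := Finset.sum_range_succ' F (k i)
    have h2 := Finset.sum_range_succ F (k i)
    rw [hF0, add_zero] at h1
    rw [hFtop, add_zero] at h2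
    rw [← h1, h2]
  -- expansions of B against S
  have hBSu : ∀ u w : V, B (S u) w = ∑ s ∈ Finset.range (k i),
      (B u ((P ^ s) a) * B ((P ^ (k i - 1 - s)) y) w +
        B u ((P ^ s) y) * B ((P ^ (k i - 1 - s)) a) w) := by
    intro u w
    rw [hSapp, map_sum, LinearMap.sum_apply]
    apply Finset.sum_congr rfl
    intro s _
    rw [map_add, LinearMap.add_apply, map_smul, map_smul, LinearMap.smul_apply,
      LinearMap.smul_apply, smul_eq_mul, smul_eq_mul]
  have hBuS : ∀ u w : V, B u (S w) = ∑ s ∈ Finset.range (k i),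
      (B w ((P ^ s) a) * B u ((P ^ (k i - 1 - s)) y) +
        B w ((P ^ s) y) * B u ((P ^ (k i - 1 - s)) a)) := by
    intro u w
    rw [hSapp, map_sum]
    apply Finset.sum_congr rfl
    intro s _
    rw [map_add, map_smul, map_smul, smul_eq_mul, smul_eq_mul]
  -- pairings of chain vectors vanish
  have hyy : ∀ t t' : ℕ, B ((P ^ t) y) ((P ^ t') y) = 0 := by
    intro t t'
    rw [hPs t]
    rw [← Module.End.mul_apply, ← pow_add]
    exact hself _ y
  have haa : ∀ t t' : ℕ, B ((P ^ t) a) ((P ^ t') a) = 0 := by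
    intro t t'
    rw [hPs t]
    rw [← Module.End.mul_apply, ← pow_add]
    exact hself _ a
  have hya : ∀ t t' : ℕ, B ((P ^ t) y) ((P ^ t') a) = 0 := fun t t' =>
    horth i j hij _ (hPmem i t y hyV) _ (hPmem j t' a haV)
  have hay : ∀ t t' : ℕ, B ((P ^ t) a) ((P ^ t') y) = 0 := fun t t' =>
    horth j i hji _ (hPmem j t a haV) _ (hPmem i t' y hyV)
  -- B (S u) (S w) = 0
  have hBSS : ∀ u w : V, B (S u) (S w) = 0 := by
    intro u w
    rw [hBSu]
    apply Finset.sum_eq_zero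
    intro s _
    have h1 : B ((P ^ (k i - 1 - s)) y) (S w) = 0 := by
      rw [hBuS]
      apply Finset.sum_eq_zero
      intro s' _
      rw [hyy, hya, mul_zero, mul_zero, add_zero]
    have h2 : B ((P ^ (k i - 1 - s)) a) (S w) = 0 := by
      rw [hBuS]
      apply Finset.sum_eq_zero
      intro s' _
      rw [hay, haa, mul_zero, mul_zero, add_zero]
    rw [h1, h2, mul_zero, mul_zero, add_zero]
  -- skew-symmetry of S w.r.t. B
  have hskew : ∀ u w : V, B (S u) w = -B u (S w) := by
    intro u w
    rw [hBSu u w, hBuS u w]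
    rw [← Finset.sum_range_reflect
      (fun s => B w ((P ^ s) a) * B u ((P ^ (k i - 1 - s)) y) +
        B w ((P ^ s) y) * B u ((P ^ (k i - 1 - s)) a)) (k i)]
    rw [← Finset.sum_neg_distrib]
    apply Finset.sum_congr rfl
    intro s hs
    have hs' : s < k i := Finset.mem_range.mp hs
    have e : k i - 1 - (k i - 1 - s) = s := by omega
    rw [e]
    rw [hanti ((P ^ (k i - 1 - s)) y) w, hanti ((P ^ (k i - 1 - s)) a) w]
    ring
  -- the automorphism g = 1 + S
  set g0 : V →ₗ[K] V := LinearMap.id + S with hg0def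
  have hg0 : ∀ w : V, g0 w = w + S w := by
    intro w; rw [hg0def]; rfl
  have hsymp : ∀ u w : V, B (g0 u) (g0 w) = B u w := by
    intro u w
    rw [hg0 u, hg0 w]
    simp only [map_add, LinearMap.add_apply]
    rw [hBSS, hskew]
    abel
  have hg0inj : Function.Injective g0 := by
    rw [← LinearMap.ker_eq_bot]
    rw [Submodule.eq_bot_iff]
    intro u hu
    have hu0 : g0 u = 0 := LinearMap.mem_ker.mp hu
    apply hBnd
    intro w
    have := hsymp u w
    rw [hu0] at this
    simpa using this.symm
  have hg0surj : Function.Surjective g0 := LinearMap.injective_iff_surjective.mp hg0inj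
  set g : V ≃ₗ[K] V := LinearEquiv.ofBijective g0 ⟨hg0inj, hg0surj⟩ with hgdef
  have hgapp : ∀ w : V, g w = g0 w := fun w => rfl
  have hmap := hW g (fun u w => by rw [hgapp, hgapp]; exact hsymp u w)
    (fun w => by
      rw [hgapp, hgapp, hg0 (P w), hg0 w, hScomm, map_add])
  have hgvW : g v ∈ W := by
    rw [← hmap]
    exact ⟨v, hvW, rfl⟩
  have hgv : g v = v + x := by
    rw [hgapp, hg0, hSv]
  rw [hgv] at hgvW
  have := W.sub_mem hgvW hvW
  simpa using this
end

section
/- Let K be the field ℝ or ℂ, (V, B) a finite-dimensional symplectic vector space over K, and P : V → V a nilpotent operator self-adjoint with respect to B. Suppose V = ⊕_{i=1}^N V_i is a B-orthogonal, P-invariant decomposition into nonzero subspaces such that, for each i, all Jordan blocks of P|_{V_i} have size exactly k_i (i.e. (P|_{V_i})^{k_i} = 0 and Ker(P|_{V_i}) ⊆ Im((P|_{V_i})^{k_i − 1})), with k_1 > k_2 > … > k_N. Then every subspace W invariant under Aut(V, B, P) decomposes as W = ⊕_{i=1}^N (W ∩ V_i). -/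
theorem iSupIndep.isCompl_biSup_ne {ι α : Type*} [CompleteLattice α] {f : ι → α}
    (hf : iSupIndep f) (htop : ⨆ i, f i = ⊤) (i : ι) : IsCompl (f i) (⨆ (j) (_ : j ≠ i), f j) :=
  ⟨hf i, by rw [codisjoint_iff, ← iSup_split_single f i, htop]⟩

namespace Submodule

section Reflection

variable {R M : Type*} [Ring R] [AddCommGroup M] [Module R M] {p q : Submodule R M}

/-- The linear involution of `M = p ⊕ q` acting as `-1` on `p` and as `1` on `q`. -/
noncomputable def reflectionOfIsCompl (h : IsCompl p q) : M ≃ₗ[R] M :=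
  (prodEquivOfIsCompl p q h).symm ≪≫ₗ (LinearEquiv.neg R).prodCongr (LinearEquiv.refl R q) ≪≫ₗ
    prodEquivOfIsCompl p q h

theorem reflectionOfIsCompl_apply_of_mem_left (h : IsCompl p q) {x : M} (hx : x ∈ p) :
    reflectionOfIsCompl h x = -x := by
  simp only [reflectionOfIsCompl, LinearEquiv.trans_apply]
  rw [show x = ((⟨x, hx⟩ : p) : M) from rfl, prodEquivOfIsCompl_symm_apply_left]
  simp

theorem reflectionOfIsCompl_apply_of_mem_right (h : IsCompl p q) {x : M} (hx : x ∈ q) :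
    reflectionOfIsCompl h x = x := by
  simp only [reflectionOfIsCompl, LinearEquiv.trans_apply]
  rw [show x = ((⟨x, hx⟩ : q) : M) from rfl, prodEquivOfIsCompl_symm_apply_right]
  simp

theorem reflectionOfIsCompl_apply_add (h : IsCompl p q) {x y : M} (hx : x ∈ p) (hy : y ∈ q) :
    reflectionOfIsCompl h (x + y) = -x + y := by
  rw [map_add, reflectionOfIsCompl_apply_of_mem_left h hx,
    reflectionOfIsCompl_apply_of_mem_right h hy]

theorem reflectionOfIsCompl_commute (h : IsCompl p q) {f : M →ₗ[R] M} (hp : p ≤ p.comap f)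
    (hq : q ≤ q.comap f) (x : M) : reflectionOfIsCompl h (f x) = f (reflectionOfIsCompl h x) := by
  obtain ⟨y, z, rfl, -⟩ := existsUnique_add_of_isCompl h x
  rw [map_add f, reflectionOfIsCompl_apply_add h (hp y.2) (hq z.2),
    reflectionOfIsCompl_apply_add h y.2 z.2, map_add, map_neg]

theorem mem_of_add_mem_of_reflectionOfIsCompl (h : IsCompl p q) (h2 : IsUnit (2 : R))
    {W : Submodule R M} (hW : ∀ w ∈ W, reflectionOfIsCompl h w ∈ W) {x y : M} (hx : x ∈ p)
    (hy : y ∈ q) (hxy : x + y ∈ W) : x ∈ W := by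
  have hsub : (x + y) - reflectionOfIsCompl h (x + y) = (2 : R) • x := by
    rw [reflectionOfIsCompl_apply_add h hx hy, two_smul]; abel
  rw [← W.smul_mem_iff_of_isUnit h2, ← hsub]
  exact W.sub_mem hxy (hW _ hxy)

end Reflection

theorem reflectionOfIsCompl_preserves_bilinForm {R M : Type*} [CommRing R] [AddCommGroup M]
    [Module R M] {p q : Submodule R M} (h : IsCompl p q) (B : LinearMap.BilinForm R M)
    (hpq : ∀ x ∈ p, ∀ y ∈ q, B x y = 0) (hqp : ∀ y ∈ q, ∀ x ∈ p, B y x = 0) (u v : M) :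
    B (reflectionOfIsCompl h u) (reflectionOfIsCompl h v) = B u v := by
  obtain ⟨a, b, rfl, -⟩ := existsUnique_add_of_isCompl h u
  obtain ⟨c, d, rfl, -⟩ := existsUnique_add_of_isCompl h v
  rw [reflectionOfIsCompl_apply_add h a.2 b.2, reflectionOfIsCompl_apply_add h c.2 d.2]
  simp only [map_add, map_neg, LinearMap.add_apply, LinearMap.neg_apply,
    hpq _ a.2 _ d.2, hqp _ b.2 _ c.2]
  ring

theorem eq_iSup_inf_of_reflectionOfIsCompl_mem {ι R M : Type*} [Fintype ι] [Ring R]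
    [AddCommGroup M] [Module R M] (h2 : IsUnit (2 : R)) {V : ι → Submodule R M}
    (hind : iSupIndep V) (htop : ⨆ i, V i = ⊤) {W : Submodule R M}
    (hW : ∀ i, ∀ w ∈ W, reflectionOfIsCompl (hind.isCompl_biSup_ne htop i) w ∈ W) :
    W = ⨆ i, W ⊓ V i := by
  classical
  refine le_antisymm (fun w hw => ?_) (iSup_le fun i => inf_le_left)
  have hwV : w ∈ ⨆ i ∈ Finset.univ, V i := by simp [htop]
  obtain ⟨μ, rfl⟩ := (mem_iSup_finset_iff_exists_sum V w).1 hwV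
  refine sum_mem fun i _ => mem_iSup_of_mem i ⟨?_, (μ i).2⟩
  have hrest : ∑ j ∈ Finset.univ.erase i, (μ j : M) ∈ ⨆ (j) (_ : j ≠ i), V j :=
    sum_mem fun j hj => mem_iSup_of_mem j (mem_iSup_of_mem (Finset.ne_of_mem_erase hj) (μ j).2)
  exact mem_of_add_mem_of_reflectionOfIsCompl _ h2 (hW i) (μ i).2 hrest
    (by rwa [Finset.add_sum_erase _ (fun j => (μ j : M)) (Finset.mem_univ i)])

end Submodule

theorem invariant_submodule_decomposes_general
    (K V : Type*) [RCLike K] [AddCommGroup V] [Module K V]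
    (B : LinearMap.BilinForm K V)
    (P : Module.End K V)
    {N : ℕ} (Vs : Fin (N + 1) → Submodule K V)
    (horth : ∀ i j, i ≠ j → ∀ u ∈ Vs i, ∀ v ∈ Vs j, B u v = 0)
    (hPVs : ∀ i, ∀ x ∈ Vs i, P x ∈ Vs i)
    (hindep : iSupIndep Vs) (hsup : ⨆ i, Vs i = ⊤)
    (W : Submodule K V) (hW : IsInvariantSubmodule B P W)
 :
    W = ⨆ i, W ⊓ Vs i := by
  refine Submodule.eq_iSup_inf_of_reflectionOfIsCompl_mem (Ne.isUnit two_ne_zero) hindep hsup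
    fun i w hw => ?_
  have hVsQ : ∀ x ∈ Vs i, ∀ y ∈ ⨆ (j) (_ : j ≠ i), Vs j, B x y = 0 := fun x hx =>
    show _ ≤ LinearMap.ker (B x) from
      iSup₂_le fun j hji y hy => horth i j (Ne.symm hji) x hx y hy
  have hQVs : ∀ y ∈ ⨆ (j) (_ : j ≠ i), Vs j, ∀ x ∈ Vs i, B y x = 0 := fun y hy x hx =>
    (show _ ≤ LinearMap.ker (B.flip x) from
      iSup₂_le fun j hji z hz => horth j i hji z hz x hx) hy
  have hPQ : ⨆ (j) (_ : j ≠ i), Vs j ≤ (⨆ (j) (_ : j ≠ i), Vs j).comap P :=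
    iSup₂_le fun j hji x hx =>
      Submodule.mem_iSup_of_mem j (Submodule.mem_iSup_of_mem hji (hPVs j x hx))
  have h := hindep.isCompl_biSup_ne hsup i
  rw [← hW _ (Submodule.reflectionOfIsCompl_preserves_bilinForm h B hVsQ hQVs)
    (Submodule.reflectionOfIsCompl_commute h (fun x hx => hPVs i x hx) hPQ)]
  exact Submodule.mem_map_of_mem hw

theorem invariant_submodule_decomposes
    (K V : Type*) [RCLike K] [AddCommGroup V] [Module K V] [FiniteDimensional K V]
    (B : LinearMap.BilinForm K V) (hBalt : B.IsAlt)
    (hBnd : ∀ u : V, (∀ v : V, B u v = 0) → u = 0)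
    (P : Module.End K V) (hP : ∀ u v : V, B (P u) v = B u (P v))
    (hnil : IsNilpotent P)
    {N : ℕ} (Vs : Fin (N + 1) → Submodule K V) (hne : ∀ i, Vs i ≠ ⊥)
    (horth : ∀ i j, i ≠ j → ∀ u ∈ Vs i, ∀ v ∈ Vs j, B u v = 0)
    (hPVs : ∀ i, ∀ x ∈ Vs i, P x ∈ Vs i)
    (hindep : iSupIndep Vs) (hsup : ⨆ i, Vs i = ⊤)
    (k : Fin (N + 1) → ℕ) (hdec : StrictAnti k)
    (hblk : ∀ i, (P.restrict (hPVs i)) ^ (k i) = 0 ∧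
      LinearMap.ker (P.restrict (hPVs i))
        ≤ LinearMap.range ((P.restrict (hPVs i)) ^ (k i - 1)))
    (W : Submodule K V) (hW : IsInvariantSubmodule B P W)
 :
    W = ⨆ i, W ⊓ Vs i :=
  invariant_submodule_decomposes_general K V B P Vs horth hPVs hindep hsup W hW
end

section
/- Let (V, B) be a finite-dimensional real symplectic vector space, P : V → V a linear operator self-adjoint with respect to B, and let A be the alternating bilinear form A(u, v) = B(Pu, v). Let α, β ∈ ℝ with β ≠ 0, and suppose (P² − 2αP + (α² + β²)I)^n = 0 for some n ≥ 1 (i.e. P has the single pair of complex conjugate eigenvalues α ± iβ). Let S be the semisimple part in the Jordan–Chevalley decomposition of the operator (P − αI)/β (so (P − αI)/β = S + N with S semisimple, N nilpotent, and SN = NS). Then S is a complex structure, S² = −I, and S is self-adjoint with respect to both A and B: B(Su, v) = B(u, Sv) and A(Su, v) = A(u, Sv) for all u, v ∈ V. -/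
/-- An operator on a vector space is semisimple if every invariant subspace has an
invariant complement. -/
def IsSemisimpleOperator {K V : Type*} [Field K] [AddCommGroup V] [Module K V]
    (S : Module.End K V) : Prop :=
  ∀ U : Submodule K V, (∀ x ∈ U, S x ∈ U) →
    ∃ U' : Submodule K V, IsCompl U U' ∧ ∀ x ∈ U', S x ∈ U'

/-!
Write `T = β⁻¹ (P - α)`, so that `T² + 1` is nilpotent. By uniqueness of the Jordan–Chevalley
decomposition, `S` is the semisimple part of `T` and hence a polynomial in `T`, thus in `P`.
Being a polynomial in the `B`-self-adjoint operator `P`, `S` is `B`-self-adjoint and commutes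
with `P`, which gives self-adjointness for `A`. Finally `S² + 1` is semisimple and, since `T - S`
is nilpotent and everything commutes, also nilpotent; so it vanishes.
-/

open Polynomial

theorem IsSemisimpleOperator.isSemisimple {K V : Type*} [Field K] [AddCommGroup V] [Module K V]
    {S : Module.End K V} (hS : IsSemisimpleOperator S) : S.IsSemisimple :=
  Module.End.isSemisimple_iff.mpr fun U hU ↦
    let ⟨U', hUU', hU'⟩ := hS U fun _ hx ↦ hU hx
    ⟨U', fun _ hx ↦ hU' _ hx, hUU'⟩

theorem isNilpotent_inv_smul_sub_sq_add_one {K A : Type*} [Field K] [Ring A] [Algebra K A]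
    {P : A} {α β : K} (hβ : β ≠ 0)
    (h : IsNilpotent (P ^ 2 - (2 * α) • P + (α ^ 2 + β ^ 2) • (1 : A))) :
    IsNilpotent ((β⁻¹ • (P - α • (1 : A))) ^ 2 + 1) := by
  have hexp : (β ^ 2) • ((β⁻¹ • (P - α • (1 : A))) ^ 2 + 1) =
      P ^ 2 - (2 * α) • P + (α ^ 2 + β ^ 2) • (1 : A) := by
    rw [smul_add, ← _root_.smul_pow, smul_inv_smul₀ hβ]
    simp only [sq, sub_mul, mul_sub, smul_mul_assoc, mul_smul_comm, mul_one, one_mul]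
    module
  rw [← inv_smul_smul₀ (pow_ne_zero 2 hβ) ((β⁻¹ • (P - α • (1 : A))) ^ 2 + 1), hexp]
  exact h.smul _

namespace LinearMap.IsAdjointPair

variable {R M M₂ : Type*} [CommRing R] [AddCommGroup M] [Module R M] [AddCommGroup M₂]
  [Module R M₂] {B : M →ₗ[R] M →ₗ[R] M₂} {f g : Module.End R M}

theorem pow (h : IsAdjointPair B B f g) (n : ℕ) : IsAdjointPair B B ⇑(f ^ n) ⇑(g ^ n) := by
  induction n with
  | zero => exact isAdjointPair_one
  | succ n ih => rw [pow_succ f, pow_succ' g]; exact ih.mul h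

theorem aeval (h : IsAdjointPair B B f g) (p : R[X]) :
    IsAdjointPair B B ⇑(aeval f p) ⇑(aeval g p) := by
  induction p using Polynomial.induction_on' with
  | add p q hp hq => rw [map_add, map_add]; exact hp.add hq
  | monomial n a =>
    simpa only [aeval_monomial, ← Algebra.smul_def, LinearMap.coe_smul] using (h.pow n).smul a

end LinearMap.IsAdjointPair

theorem LinearMap.IsSelfAdjoint.of_mem_adjoin_singleton {R M M₂ : Type*} [CommRing R]
    [AddCommGroup M] [Module R M] [AddCommGroup M₂] [Module R M₂] {B : M →ₗ[R] M →ₗ[R] M₂}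
    {f g : Module.End R M} (hf : B.IsSelfAdjoint f) (hg : g ∈ Algebra.adjoin R {f}) :
    B.IsSelfAdjoint g := by
  rw [Algebra.adjoin_singleton_eq_range_aeval] at hg
  obtain ⟨p, rfl⟩ := hg
  exact IsAdjointPair.aeval hf p

namespace Module.End

variable {K V : Type*} [Field K] [AddCommGroup V] [Module K V] [FiniteDimensional K V]

theorem mem_adjoin_add_of_isNilpotent_of_isSemisimple [PerfectField K] {n s : End K V}
    (hn : IsNilpotent n) (hs : s.IsSemisimple) (hns : Commute n s) :
    s ∈ Algebra.adjoin K {n + s} := by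
  obtain ⟨n₀, hn₀, s₀, hs₀, hn₀_nil, hs₀_ss, h₀⟩ := (n + s).exists_isNilpotent_isSemisimple
  have hn₀s₀ : Commute n₀ s₀ :=
    Algebra.commute_of_mem_adjoin_singleton_of_commute hs₀
      (Algebra.commute_of_mem_adjoin_self hn₀).symm
  obtain ⟨-, rfl⟩ := isNilpotent_isSemisimple_unique hn hs hn₀_nil hs₀_ss hns hn₀s₀ h₀
  exact hs₀

theorem aeval_eq_zero_of_isNilpotent_aeval {f s : End K V} (hs_mem : s ∈ Algebra.adjoin K {f})
    (hs : s.IsSemisimple) (hfs : IsNilpotent (f - s)) {p : K[X]}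
    (hp : IsNilpotent (aeval f p)) : aeval s p = 0 := by
  let A := Algebra.adjoin K {f}
  let f' : A := ⟨f, Algebra.self_mem_adjoin_singleton K f⟩
  let s' : A := ⟨s, hs_mem⟩
  have hval_inj : Function.Injective A.val := Subtype.val_injective
  have hfs' : IsNilpotent (f' - s') := (IsNilpotent.map_iff hval_inj).mp hfs
  have hp' : IsNilpotent (aeval f' p) := by
    rwa [← IsNilpotent.map_iff hval_inj, ← aeval_algHom_apply]
  -- `A` is commutative, so polynomials respect congruence modulo nilpotents there
  have hsp' : IsNilpotent (aeval s' p) := by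
    simpa using (Commute.all _ _).isNilpotent_sub hp'
      (isNilpotent_aeval_sub_of_isNilpotent_sub p hfs')
  have hsp : IsNilpotent (aeval s p) := by
    rwa [← IsNilpotent.map_iff hval_inj, ← aeval_algHom_apply] at hsp'
  exact eq_zero_of_isNilpotent_isSemisimple hsp (hs.aeval p)

end Module.End

theorem semisimple_part_is_selfadjoint_complex_structure_general
    (V : Type*) [AddCommGroup V] [Module ℝ V] [FiniteDimensional ℝ V]
    (B : LinearMap.BilinForm ℝ V)
    (P : Module.End ℝ V) (hP : ∀ u v : V, B (P u) v = B u (P v))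
    (α β : ℝ) (hβ : β ≠ 0) (n : ℕ)
    (hchar : (P ^ 2 - (2 * α) • P + (α ^ 2 + β ^ 2) • (1 : Module.End ℝ V)) ^ n = 0)
    (S Nn : Module.End ℝ V) (hS : IsSemisimpleOperator S) (hNn : IsNilpotent Nn)
    (hcomm : S * Nn = Nn * S)
    (hsum : β⁻¹ • (P - α • (1 : Module.End ℝ V)) = S + Nn) :
    S ^ 2 = -1 ∧ (∀ u v : V, B (S u) v = B u (S v)) ∧
      (∀ u v : V, B (P (S u)) v = B (P u) (S v)) := by
  set T := β⁻¹ • (P - α • (1 : Module.End ℝ V))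
  have hTP : T ∈ Algebra.adjoin ℝ {P} :=
    Subalgebra.smul_mem _ (sub_mem (Algebra.self_mem_adjoin_singleton ℝ P)
      (Subalgebra.smul_mem _ (one_mem _) α)) β⁻¹
  have hST : S ∈ Algebra.adjoin ℝ {T} := by
    rw [hsum, add_comm]
    exact Module.End.mem_adjoin_add_of_isNilpotent_of_isSemisimple hNn hS.isSemisimple hcomm.symm
  have hSP : S ∈ Algebra.adjoin ℝ {P} := Algebra.adjoin_le (Set.singleton_subset_iff.mpr hTP) hST
  have hS_sq : aeval S (X ^ 2 + 1 : ℝ[X]) = 0 := by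
    refine Module.End.aeval_eq_zero_of_isNilpotent_aeval hST hS.isSemisimple
      (by rwa [hsum, add_sub_cancel_left]) ?_
    simpa using isNilpotent_inv_smul_sub_sq_add_one hβ ⟨n, hchar⟩
  have hSB : B.IsSelfAdjoint S := LinearMap.IsSelfAdjoint.of_mem_adjoin_singleton hP hSP
  refine ⟨by simpa [← eq_neg_iff_add_eq_zero] using hS_sq, hSB, fun u v ↦ ?_⟩
  rw [← Module.End.mul_apply, (Algebra.commute_of_mem_adjoin_self hSP).eq, Module.End.mul_apply]
  exact hSB (P u) v

/-- If `P` is a `B`-self-adjoint operator on a real symplectic space `(V, B)` with the single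
pair of complex conjugate eigenvalues `α ± iβ` (`β ≠ 0`), and `S` is the semisimple part of
the Jordan–Chevalley decomposition of `(P − αI)/β`, then `S` is a complex structure
(`S² = −I`) which is self-adjoint with respect to both `B` and `A(u,v) = B(Pu, v)`. -/
theorem semisimple_part_is_selfadjoint_complex_structure
    (V : Type*) [AddCommGroup V] [Module ℝ V] [FiniteDimensional ℝ V]
    (B : LinearMap.BilinForm ℝ V) (hBalt : B.IsAlt)
    (hBnd : ∀ u : V, (∀ v : V, B u v = 0) → u = 0)
    (P : Module.End ℝ V) (hP : ∀ u v : V, B (P u) v = B u (P v))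
    (α β : ℝ) (hβ : β ≠ 0) (n : ℕ) (hn : 1 ≤ n)
    (hchar : (P ^ 2 - (2 * α) • P + (α ^ 2 + β ^ 2) • (1 : Module.End ℝ V)) ^ n = 0)
    (S Nn : Module.End ℝ V) (hS : IsSemisimpleOperator S) (hNn : IsNilpotent Nn)
    (hcomm : S * Nn = Nn * S)
    (hsum : β⁻¹ • (P - α • (1 : Module.End ℝ V)) = S + Nn) :
    S ^ 2 = -1 ∧ (∀ u v : V, B (S u) v = B u (S v)) ∧
      (∀ u v : V, B (P (S u)) v = B (P u) (S v)) :=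
  semisimple_part_is_selfadjoint_complex_structure_general V B P hP α β hβ n hchar S Nn hS hNn hcomm
    hsum
end

section
/- Let V be a finite-dimensional real vector space, B a nondegenerate alternating bilinear form on V, P : V → V self-adjoint with respect to B, and A the alternating form A(u, v) = B(Pu, v). Let α, β ∈ ℝ with β ≠ 0, suppose (P² − 2αP + (α² + β²)I)^n = 0 for some n ≥ 1, and let J be the semisimple part of the Jordan–Chevalley decomposition of (P − αI)/β, so J² = −I. Then every automorphism Q ∈ Aut(V, A, B) commutes with J: QJ = JQ. -/
/-- Let `(V, B)` be a real symplectic space, `P` a `B`-self-adjoint operator with the single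
pair of complex conjugate eigenvalues `α ± iβ` (`β ≠ 0`), `A(u,v) = B(Pu, v)`, and `J` the
semisimple part of the Jordan–Chevalley decomposition of `(P − αI)/β` (so `J² = −I`). Then
every automorphism `Q ∈ Aut(V, A, B)` commutes with `J`. -/
theorem automorphism_commutes_with_complex_structure
    (V : Type*) [AddCommGroup V] [Module ℝ V] [FiniteDimensional ℝ V]
    (B : LinearMap.BilinForm ℝ V) (hBalt : B.IsAlt)
    (hBnd : ∀ u : V, (∀ v : V, B u v = 0) → u = 0)
    (P : Module.End ℝ V) (hP : ∀ u v : V, B (P u) v = B u (P v))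
    (α β : ℝ) (hβ : β ≠ 0) (n : ℕ) (hn : 1 ≤ n)
    (hchar : (P ^ 2 - (2 * α) • P + (α ^ 2 + β ^ 2) • (1 : Module.End ℝ V)) ^ n = 0)
    (J Nn : Module.End ℝ V) (hJss : IsSemisimpleOperator J) (hNn : IsNilpotent Nn)
    (hcomm : J * Nn = Nn * J)
    (hsum : β⁻¹ • (P - α • (1 : Module.End ℝ V)) = J + Nn)
    (hJ : J ^ 2 = -1)
    (Q : V ≃ₗ[ℝ] V)
    (hQA : ∀ u v : V, B (P (Q u)) (Q v) = B (P u) v)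
    (hQB : ∀ u v : V, B (Q u) (Q v) = B u v) :
    ∀ v : V, Q (J v) = J (Q v) := by
  classical
  -- `Q` commutes with `P`.
  have hQP : ∀ u : V, P (Q u) = Q (P u) := by
    intro u
    have h : ∀ v : V, B (P (Q u) - Q (P u)) v = 0 := by
      intro v
      obtain ⟨w, rfl⟩ := Q.surjective v
      have h1 := hQA u w
      have h2 := hQB (P u) w
      simp only [map_sub, LinearMap.sub_apply, h1, h2, sub_self]
    exact sub_eq_zero.mp (hBnd _ h)
  set T : Module.End ℝ V := β⁻¹ • (P - α • (1 : Module.End ℝ V)) with hT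
  have hTsum : T = J + Nn := hsum
  have hJNn : Commute J Nn := hcomm
  have hTJ : Commute T J := by
    rw [hTsum]; exact (Commute.refl J).add_left hJNn.symm
  have hTNn : Commute T Nn := by
    rw [hTsum]; exact hJNn.add_left (Commute.refl Nn)
  -- anything in `adjoin ℝ {T}` commutes with anything commuting with `T`
  have key : ∀ x : Module.End ℝ V, x ∈ Algebra.adjoin ℝ {T} →
      ∀ y : Module.End ℝ V, Commute T y → Commute x y := by
    intro x hx y hy
    have hle : Algebra.adjoin ℝ {T} ≤ Subalgebra.centralizer ℝ {y} := by
      apply Algebra.adjoin_le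
      intro t ht
      rw [Set.mem_singleton_iff] at ht
      subst ht
      simp only [SetLike.mem_coe, Subalgebra.mem_centralizer_iff]
      intro g hg
      rw [Set.mem_singleton_iff] at hg
      subst hg
      exact hy.symm
    have := Subalgebra.mem_centralizer_iff ℝ |>.mp (hle hx) y rfl
    exact this.symm
  -- Jordan–Chevalley decomposition of `T` with components in `adjoin ℝ {T}`
  obtain ⟨n', hn'mem, s', hs'mem, hn'nil, hs'ss, hTsum'⟩ :=
    Module.End.exists_isNilpotent_isSemisimple (f := T)
  -- `J` is semisimple in the Mathlib sense
  have hJssM : J.IsSemisimple := by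
    rw [Module.End.isSemisimple_iff]
    intro p hp
    obtain ⟨q, hc, hq⟩ := hJss p (fun x hx => (Module.End.mem_invtSubmodule J).mp hp hx)
    exact ⟨q, (Module.End.mem_invtSubmodule J).mpr (fun x hx => hq x hx), hc⟩
  -- `J = s'`, hence `J ∈ adjoin ℝ {T}`
  have hJs' : Commute J s' := (key s' hs'mem J hTJ).symm
  have hNns' : Commute n' Nn := key n' hn'mem Nn hTNn
  have hdiff : J - s' = n' - Nn := by
    rw [sub_eq_sub_iff_add_eq_add]
    rw [← hTsum, hTsum']
  have hdnil : IsNilpotent (J - s') := by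
    rw [hdiff]
    exact hNns'.isNilpotent_sub hn'nil hNn
  have hdss : (J - s').IsSemisimple :=
    Module.End.IsSemisimple.sub_of_commute hJs' hJssM hs'ss
  have hJeq : J = s' := by
    have := Module.End.eq_zero_of_isNilpotent_isSemisimple hdnil hdss
    exact sub_eq_zero.mp this
  have hJmem : J ∈ Algebra.adjoin ℝ {T} := hJeq ▸ hs'mem
  -- `Q` (as an endomorphism) commutes with `T`
  have hTQ : Commute T (Q : Module.End ℝ V) := by
    apply LinearMap.ext
    intro v
    simp only [Module.End.mul_apply, LinearMap.smul_apply, LinearMap.sub_apply,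
      Module.End.one_apply, LinearMap.coe_coe, map_sub, map_smul, hQP]
    rw [hT]
    simp [hQP, map_sub, map_smul, sub_smul, smul_sub]
  have hJQ : Commute J (Q : Module.End ℝ V) := key J hJmem _ hTQ
  intro v
  have := LinearMap.congr_fun hJQ v
  simpa using this.symm
end
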